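/- arXiv:2110.03038 — 4 statements merged into one kernel-verified Lean document; each statement's English description precedes it below -/
import Mathlib

section
/- For all nonnegative integers n and m: ∫ S_n(x) R_m(x) dμ(x) = 0 whenever m ≤ n − 1, m = n + 1, or m ≥ n + 3; and ∫ S_n(x) R_m(x) dμ(x) ≠ 0 when m = n and when m = n + 2. -/
open MeasureTheory Polynomial

/-- Evaluation of a real polynomial at a complex point. -/
noncomputable def evC (p : Polynomial ℝ) (z : ℂ) : ℂ :=
  (p.map (algebraMap ℝ ℂ)).eval z

/-- Evaluation of the derivative of a real polynomial at a complex point. -/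
noncomputable def devC (p : Polynomial ℝ) (z : ℂ) : ℂ :=
  (Polynomial.derivative (p.map (algebraMap ℝ ℂ))).eval z

/-- The (topological) support of a measure on ℝ: points all of whose
neighborhoods have nonzero measure. -/
def measSupport (μ : Measure ℝ) : Set ℝ := {x | ∀ U ∈ nhds x, μ U ≠ 0}

/-- c_n = R_n(i) R_{n+1}(-i) - R_{n+1}(i) R_n(-i). -/
noncomputable def cconst (R : ℕ → Polynomial ℝ) (n : ℕ) : ℂ :=
  evC (R n) Complex.I * evC (R (n+1)) (-Complex.I)
    - evC (R (n+1)) Complex.I * evC (R n) (-Complex.I)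

/-- The 3×3 determinant polynomial D_n(x) ∈ ℂ[x], whose first two rows are the
values of R_n, R_{n+1}, R_{n+2} at i and -i and whose last row consists of the
polynomials themselves. -/
noncomputable def Dpoly (R : ℕ → Polynomial ℝ) (n : ℕ) : Polynomial ℂ :=
  Matrix.det
    !![Polynomial.C (evC (R n) Complex.I), Polynomial.C (evC (R (n+1)) Complex.I),
         Polynomial.C (evC (R (n+2)) Complex.I);
       Polynomial.C (evC (R n) (-Complex.I)), Polynomial.C (evC (R (n+1)) (-Complex.I)),
         Polynomial.C (evC (R (n+2)) (-Complex.I));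
       (R n).map (algebraMap ℝ ℂ), (R (n+1)).map (algebraMap ℝ ℂ),
         (R (n+2)).map (algebraMap ℝ ℂ)]


lemma evC_conj (p : Polynomial ℝ) (z : ℂ) :
    evC p ((starRingEnd ℂ) z) = (starRingEnd ℂ) (evC p z) := by
  have h : (starRingEnd ℂ).comp (algebraMap ℝ ℂ) = algebraMap ℝ ℂ := by
    ext x; simp [Complex.conj_ofReal]
  simp only [evC, eval_map, Polynomial.hom_eval₂, h]

lemma devC_eq (p : Polynomial ℝ) (z : ℂ) : devC p z = evC (Polynomial.derivative p) z := by
  simp [devC, evC, derivative_map]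

lemma pow_two_dvd_of_root (p : Polynomial ℂ) (a : ℂ) (h0 : p.eval a = 0)
    (h1 : (Polynomial.derivative p).eval a = 0) : (X - C a)^2 ∣ p := by
  obtain ⟨q, rfl⟩ := Polynomial.dvd_iff_isRoot.mpr h0
  have h1' : q.eval a = 0 := by
    simpa [derivative_mul] using h1
  obtain ⟨r, rfl⟩ := Polynomial.dvd_iff_isRoot.mpr h1'
  exact ⟨r, by ring⟩

lemma real_sq_dvd (q : Polynomial ℝ) (h0 : evC q Complex.I = 0) (h1 : devC q Complex.I = 0) :
    ((1 + Polynomial.X^2)^2 : Polynomial ℝ) ∣ q := by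
  have hm : ((1 + X^2 : Polynomial ℝ)^2).Monic := by
    have h2 : (1 + X^2 : Polynomial ℝ) = X^2 + C 1 := by simp [add_comm]
    rw [h2]
    exact (monic_X_pow_add_C _ (by norm_num)).pow 2
  rw [← Polynomial.map_dvd_map (algebraMap ℝ ℂ) (algebraMap ℝ ℂ).injective hm]
  have h0' : (q.map (algebraMap ℝ ℂ)).eval (-Complex.I) = 0 := by
    have h := evC_conj q Complex.I
    rw [Complex.conj_I, h0, map_zero] at h
    exact h
  have h1' : (Polynomial.derivative (q.map (algebraMap ℝ ℂ))).eval (-Complex.I) = 0 := by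
    have h1e : evC (Polynomial.derivative q) Complex.I = 0 := by
      rw [← devC_eq]; exact h1
    have h := evC_conj (Polynomial.derivative q) Complex.I
    rw [Complex.conj_I, h1e, map_zero] at h
    rw [evC] at h
    rw [derivative_map]
    exact h
  have d1 : (X - C Complex.I)^2 ∣ q.map (algebraMap ℝ ℂ) :=
    pow_two_dvd_of_root _ _ h0 h1
  have d2 : (X - C (-Complex.I))^2 ∣ q.map (algebraMap ℝ ℂ) :=
    pow_two_dvd_of_root _ _ h0' h1'
  have cop : IsCoprime ((X - C Complex.I)^2 : Polynomial ℂ) ((X - C (-Complex.I))^2) := by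
    refine IsCoprime.pow ?_
    refine isCoprime_X_sub_C_of_isUnit_sub (isUnit_iff_ne_zero.mpr ?_)
    simp only [sub_neg_eq_add, ← two_mul]
    exact mul_ne_zero two_ne_zero Complex.I_ne_zero
  have hdvd := cop.mul_dvd d1 d2
  have hC : (C Complex.I) * (C Complex.I) = -1 := by
    rw [← C_mul, Complex.I_mul_I]; simp
  have hI : (X - C Complex.I) * (X - C (-Complex.I)) = 1 + X^2 := by
    have : (X - C Complex.I) * (X - C (-Complex.I))
        = X^2 - (C Complex.I * C Complex.I) := by
      rw [map_neg]; ring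
    rw [this, hC]; ring
  have key : ((1+X^2 : Polynomial ℝ)^2).map (algebraMap ℝ ℂ)
      = (X - C Complex.I)^2 * (X - C (-Complex.I))^2 := by
    rw [← mul_pow, hI]
    simp [Polynomial.map_pow, Polynomial.map_add, Polynomial.map_one]
  rw [key]
  exact hdvd

lemma intRat {μ : Measure ℝ} (hint : ∀ p : Polynomial ℝ, Integrable (fun x => p.eval x) μ)
    (p : Polynomial ℝ) : Integrable (fun x => p.eval x / (1+x^2)^2) μ := by
  refine Integrable.mono' ((hint p).abs) ?_ ?_
  · refine Continuous.aestronglyMeasurable ?_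
    refine Continuous.div (by fun_prop) (by fun_prop) fun x => by positivity
  · refine Filter.Eventually.of_forall fun x => ?_
    have h1 : (1:ℝ) ≤ (1+x^2)^2 := by nlinarith [sq_nonneg x, sq_nonneg (x^2)]
    have h2 : |(1+x^2)^2| = (1+x^2)^2 := abs_of_pos (by positivity)
    rw [Real.norm_eq_abs, abs_div, h2]
    exact div_le_self (abs_nonneg _) h1 |>.trans_eq rfl

lemma orthP {μ : Measure ℝ} (hint : ∀ p : Polynomial ℝ, Integrable (fun x => p.eval x) μ)
    (P : ℕ → Polynomial ℝ) (hPmonic : ∀ n, (P n).Monic) (hPdeg : ∀ n, (P n).natDegree = n)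
    (hPorth : ∀ m n, m ≠ n → ∫ x, (P m).eval x * (P n).eval x ∂μ = 0) :
    ∀ N (q : Polynomial ℝ), q.natDegree ≤ N → ∀ j, N < j →
      ∫ x, q.eval x * (P j).eval x ∂μ = 0 := by
  intro N
  induction N with
  | zero =>
    intro q hq j hj
    have hP0 : P 0 = 1 := (hPmonic 0).natDegree_eq_zero.mp (hPdeg 0)
    have h0 := hPorth 0 j (Nat.ne_of_lt hj)
    rw [hP0] at h0
    simp only [eval_one, one_mul] at h0
    rw [eq_C_of_natDegree_le_zero hq]
    simp only [eval_C]
    rw [MeasureTheory.integral_const_mul, h0, mul_zero]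
  | succ N ih =>
    intro q hq j hj
    set c := q.coeff (N+1) with hc
    set q' := q - C c * P (N+1) with hq'
    have hdq' : q'.natDegree ≤ N := by
      refine natDegree_le_iff_coeff_eq_zero.mpr fun m hm => ?_
      rw [hq', coeff_sub, coeff_C_mul]
      rcases eq_or_lt_of_le (Nat.succ_le_of_lt hm) with h | h
      · have : (P (N+1)).coeff (N+1) = 1 := by
          have := (hPmonic (N+1)).coeff_natDegree
          rwa [hPdeg] at this
        rw [← h, this, mul_one, sub_self]
      · have h1 : q.coeff m = 0 := coeff_eq_zero_of_natDegree_lt (lt_of_le_of_lt hq h)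
        have h2 : (P (N+1)).coeff m = 0 := coeff_eq_zero_of_natDegree_lt (by rw [hPdeg]; exact h)
        rw [h1, h2, mul_zero, sub_self]
    have hsplit : (fun x => q.eval x * (P j).eval x)
        = fun x => q'.eval x * (P j).eval x + c * ((P (N+1)).eval x * (P j).eval x) := by
      funext x
      rw [hq']
      simp only [eval_sub, eval_mul, eval_C]
      ring
    rw [hsplit, integral_add ?_ ?_]
    · rw [ih q' hdq' j (lt_trans (Nat.lt_succ_self N) hj),
        MeasureTheory.integral_const_mul, hPorth (N+1) j (Nat.ne_of_lt hj), mul_zero, add_zero]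
    · simpa using hint (q' * P j)
    · exact (by simpa using hint (P (N+1) * P j) :
        Integrable (fun x => (P (N+1)).eval x * (P j).eval x) μ).const_mul c

/-- Theorem 4.3: biorthogonality-type relations between S_n and R_m. -/
theorem stmt_6
    (μ : Measure ℝ)
    (hsymm : μ.map (fun x => -x) = μ)
    (hsupp : (measSupport μ).Infinite)
    (hint : ∀ p : Polynomial ℝ, Integrable (fun x => p.eval x) μ)
    (P : ℕ → Polynomial ℝ)
    (hPmonic : ∀ n, (P n).Monic)
    (hPdeg : ∀ n, (P n).natDegree = n)
    (hPorth : ∀ m n, m ≠ n → ∫ x, (P m).eval x * (P n).eval x ∂μ = 0)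
    (hPparity : ∀ n x, (P n).eval (-x) = (-1 : ℝ)^n * (P n).eval x)
    (A B : ℕ → ℝ) (R : ℕ → Polynomial ℝ)
    (hR0 : R 0 = 1)
    (hR1 : R 1 = P 3 + Polynomial.C (A 1) * P 1)
    (hRn : ∀ n, 2 ≤ n →
      R n = P (n+2) + Polynomial.C (A n) * P n + Polynomial.C (B n) * P (n-2))
    (hRi : ∀ n, 1 ≤ n → devC (R n) Complex.I = 0)
    (hRii : ∀ n, 1 ≤ n → ∫ x, (R n).eval x / (1+x^2)^2 ∂μ = 0)
    (hRiii : ∀ n, 2 ≤ n → ∫ x, (R 1).eval x * (R n).eval x / (1+x^2)^2 ∂μ = 0)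
    (S : ℕ → Polynomial ℝ)
    (hc : ∀ n, cconst R n ≠ 0)
    (hS : ∀ n, Polynomial.C (cconst R n) * ((1 + Polynomial.X^2)^2)
            * ((S n).map (algebraMap ℝ ℂ)) = Dpoly R n)
    :
    ∀ n m : ℕ,
      ((m < n ∨ m = n + 1 ∨ n + 3 ≤ m) → ∫ x, (S n).eval x * (R m).eval x ∂μ = 0) ∧
      ((m = n ∨ m = n + 2) → ∫ x, (S n).eval x * (R m).eval x ∂μ ≠ 0) := by
  have hRdeg : ∀ k, (R k).natDegree ≤ k + 2 := by
    intro k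
    match k with
    | 0 => rw [hR0]; simp
    | 1 =>
      rw [hR1]
      refine (natDegree_add_le _ _).trans ?_
      simp only [max_le_iff]
      exact ⟨by rw [hPdeg], (natDegree_C_mul_le _ _).trans (by rw [hPdeg]; norm_num)⟩
    | (m+2) =>
      rw [hRn (m+2) (by omega)]
      refine (natDegree_add_le _ _).trans ?_
      simp only [max_le_iff]
      refine ⟨(natDegree_add_le _ _).trans ?_, (natDegree_C_mul_le _ _).trans (by rw [hPdeg]; omega)⟩
      simp only [max_le_iff]
      exact ⟨by rw [hPdeg], (natDegree_C_mul_le _ _).trans (by rw [hPdeg]; omega)⟩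
  have hReval : ∀ k (x : ℝ), (R k).eval (-x) = (-1:ℝ)^k * (R k).eval x := by
    intro k x
    match k with
    | 0 => rw [hR0]; simp
    | 1 => rw [hR1]; simp only [eval_add, eval_mul, eval_C, hPparity]; ring
    | (m+2) =>
      rw [hRn (m+2) (by omega)]
      simp only [eval_add, eval_mul, eval_C, hPparity, Nat.add_sub_cancel]
      have e1 : (-1:ℝ)^(m+2+2) = (-1)^(m+2) := by rw [pow_add]; norm_num
      have e2 : (-1:ℝ)^m = (-1)^(m+2) := by rw [pow_add]; norm_num
      rw [e1, e2]; ring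
  have hRcomp : ∀ k, (R k).comp (-X) = C ((-1:ℝ)^k) * R k := by
    intro k
    refine Polynomial.funext fun x => ?_
    simp [eval_comp, hReval, eval_mul]
  have hEvNeg : ∀ k (z : ℂ), evC (R k) (-z) = (-1:ℂ)^k * evC (R k) z := by
    intro k z
    have h := congrArg (Polynomial.map (algebraMap ℝ ℂ)) (hRcomp k)
    rw [Polynomial.map_comp] at h
    have h2 := congrArg (Polynomial.eval z) h
    simp only [Polynomial.map_neg, Polynomial.map_X, eval_comp, eval_neg, eval_X,
      Polynomial.map_mul, map_C, eval_mul, eval_C] at h2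
    rw [evC, evC, h2]
    push_cast
    ring
  -- R 1 = X^3 + 3X
  have hR1X : R 1 = X^3 + C 3 * X := by
    set d := R 1 - (X^3 + C 3 * X) with hd
    have hGdeg : (X^3 + C 3 * X : Polynomial ℝ).natDegree ≤ 3 := by
      refine (natDegree_add_le _ _).trans ?_
      simp only [max_le_iff, natDegree_X_pow]
      exact ⟨le_refl _, (natDegree_C_mul_le _ _).trans (by simp)⟩
    have hco3 : (R 1).coeff 3 = 1 := by
      rw [hR1, coeff_add, coeff_C_mul]
      have h1 : (P 3).coeff 3 = 1 := by
        have := (hPmonic 3).coeff_natDegree; rwa [hPdeg] at this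
      have h2 : (P 1).coeff 3 = 0 := coeff_eq_zero_of_natDegree_lt (by rw [hPdeg]; norm_num)
      rw [h1, h2, mul_zero, add_zero]
    have hG3 : (X^3 + C 3 * X : Polynomial ℝ).coeff 3 = 1 := by
      rw [coeff_add, coeff_X_pow, coeff_C_mul, coeff_X]
      norm_num
    have hd2 : d.natDegree ≤ 2 := by
      refine natDegree_le_iff_coeff_eq_zero.mpr fun m hm => ?_
      rw [hd, coeff_sub]
      rcases eq_or_lt_of_le (Nat.succ_le_of_lt hm) with h | h
      · rw [← h, hco3, hG3, sub_self]
      · rw [coeff_eq_zero_of_natDegree_lt (lt_of_le_of_lt (hRdeg 1) (by omega)),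
          coeff_eq_zero_of_natDegree_lt (lt_of_le_of_lt hGdeg h), sub_self]
    have hddev : devC d Complex.I = 0 := by
      have h1 : devC (R 1) Complex.I = 0 := hRi 1 le_rfl
      rw [devC_eq] at h1 ⊢
      rw [hd, derivative_sub]
      have : evC (derivative (R 1) - derivative (X ^ 3 + C 3 * X)) Complex.I
          = evC (derivative (R 1)) Complex.I - evC (derivative (X^3 + C 3 * X)) Complex.I := by
        simp [evC]
      rw [this, h1, zero_sub, neg_eq_zero]
      have hder : derivative (X^3 + C 3 * X : Polynomial ℝ) = C 3 * X^2 + C 3 := by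
        simp [derivative_X_pow]
        rw [show (3:ℝ) = 2 + 1 by norm_num, C_add, C_1]
      rw [hder]
      simp only [evC, Polynomial.map_add, Polynomial.map_mul, Polynomial.map_pow, map_C,
        Polynomial.map_X, eval_add, eval_mul, eval_pow, eval_X, eval_C, Complex.I_sq]
      push_cast
      ring
    -- derivative d has natDegree ≤ 1 and evC = 0, so it's 0
    have he : derivative d = 0 := by
      set e := derivative d with he
      have hedeg : e.natDegree ≤ 1 := (natDegree_derivative_le d).trans (by omega)
      have heval : evC e Complex.I = 0 := by rw [← devC_eq]; exact hddev
      have heq : e = C (e.coeff 1) * X + C (e.coeff 0) := eq_X_add_C_of_natDegree_le_one hedeg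
      have hev2 : (e.coeff 1 : ℂ) * Complex.I + (e.coeff 0 : ℂ) = 0 := by
        rw [heq] at heval
        simpa [evC] using heval
      have h1 : e.coeff 1 = 0 := by
        have := congrArg Complex.im hev2
        simpa using this
      have h0 : e.coeff 0 = 0 := by
        have := congrArg Complex.re hev2
        simpa using this
      rw [heq, h1, h0]
      simp
    have hd0 : d.natDegree = 0 := natDegree_eq_zero_of_derivative_eq_zero he
    have hdC : d = C (d.coeff 0) := eq_C_of_natDegree_eq_zero hd0
    have hdeval : d.eval 0 = 0 := by
      rw [hd]
      simp only [eval_sub, eval_add, eval_pow, eval_X, eval_mul, eval_C]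
      have := hReval 1 0
      simp only [neg_zero, pow_one, neg_one_mul] at this
      have h10 : (R 1).eval 0 = 0 := by linarith
      rw [h10]; ring
    have : d = 0 := by
      rw [hdC] at hdeval ⊢
      simp only [eval_C] at hdeval
      rw [hdeval, map_zero]
    exact sub_eq_zero.mp (hd ▸ this)
  have hEv1 : evC (R 1) Complex.I = 2 * Complex.I := by
    rw [hR1X]
    simp only [evC, Polynomial.map_add, Polynomial.map_mul, Polynomial.map_pow, map_C,
      Polynomial.map_X, eval_add, eval_mul, eval_pow, eval_X, eval_C]
    rw [pow_succ, Complex.I_sq]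
    push_cast; ring
  have hRI0 : ∀ k, evC (R k) Complex.I ≠ 0 := by
    intro k hk
    apply hc k
    rw [cconst, hEvNeg k (Complex.I), hk]
    ring
  -- conj of evC at I
  have hconjI : ∀ p : Polynomial ℝ, evC p (-Complex.I) = (starRingEnd ℂ) (evC p Complex.I) := by
    intro p
    rw [← Complex.conj_I, evC_conj]
  -- decomposition
  have hdec : ∀ k, 1 ≤ k → ∃ (u : ℝ) (W : Polynomial ℝ),
      R k = C u * R (k % 2) + (1+X^2)^2 * W ∧ (W = 0 ∨ W.natDegree + 2 ≤ k) := by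
    intro k hk1
    set a := evC (R k) Complex.I with ha
    have hconj : (starRingEnd ℂ) a = (-1:ℂ)^k * a := by
      rw [← hconjI, hEvNeg]
    -- choose u and prove evC (C u * R (k%2)) I = a
    have hkey : ∃ u : ℝ, evC (C u * R (k % 2)) Complex.I = a := by
      rcases Nat.even_or_odd k with hpar | hpar
      · have h1 : (-1:ℂ)^k = 1 := hpar.neg_one_pow
        rw [h1, one_mul] at hconj
        obtain ⟨r, hr⟩ := Complex.conj_eq_iff_real.mp hconj
        refine ⟨r, ?_⟩
        rw [Nat.even_iff.mp hpar, hR0]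
        simp [evC, hr]
      · have h1 : (-1:ℂ)^k = -1 := hpar.neg_one_pow
        rw [h1, neg_one_mul] at hconj
        have hre : a.re = 0 := by
          have := congrArg Complex.re hconj
          simp only [Complex.conj_re, Complex.neg_re] at this
          linarith
        refine ⟨a.im / 2, ?_⟩
        rw [Nat.odd_iff.mp hpar]
        have : evC (C (a.im / 2) * R 1) Complex.I = (a.im / 2 : ℝ) * evC (R 1) Complex.I := by
          simp [evC]
        rw [this, hEv1]
        rw [show ((a.im/2:ℝ):ℂ) * (2*Complex.I) = (a.im:ℂ) * Complex.I by push_cast; ring]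
        apply Complex.ext <;> simp [hre]
    obtain ⟨u, hu⟩ := hkey
    set q := R k - C u * R (k % 2) with hqdef
    have hq0 : evC q Complex.I = 0 := by
      have : evC q Complex.I = evC (R k) Complex.I - evC (C u * R (k % 2)) Complex.I := by
        simp [evC, hqdef]
      rw [this, hu, ← ha, sub_self]
    have hq1 : devC q Complex.I = 0 := by
      have hd1 : devC q Complex.I = devC (R k) Complex.I - (u:ℂ) * devC (R (k % 2)) Complex.I := by
        simp [devC, hqdef, derivative_sub, derivative_C_mul]
      have hdkm : devC (R (k % 2)) Complex.I = 0 := by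
        rcases Nat.even_or_odd k with hpar | hpar
        · rw [Nat.even_iff.mp hpar, hR0]
          simp [devC]
        · rw [Nat.odd_iff.mp hpar]
          exact hRi 1 le_rfl
      rw [hd1, hdkm, hRi k hk1, mul_zero, sub_self]
    obtain ⟨W, hW⟩ := real_sq_dvd q hq0 hq1
    refine ⟨u, W, by rw [← hW, hqdef]; ring, ?_⟩
    rcases eq_or_ne W 0 with h | h
    · exact Or.inl h
    · right
      have hmon : ((1 + X^2 : Polynomial ℝ)^2).Monic := by
        have h2 : (1 + X^2 : Polynomial ℝ) = X^2 + C 1 := by simp [add_comm]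
        rw [h2]; exact (monic_X_pow_add_C _ (by norm_num)).pow 2
      have hWdeg : ((1 + X^2 : Polynomial ℝ)^2 * W).natDegree = 4 + W.natDegree := by
        rw [natDegree_mul hmon.ne_zero h]
        congr 1
        have h2 : (1 + X^2 : Polynomial ℝ) = X^2 + C 1 := by simp [add_comm]
        rw [natDegree_pow, h2, natDegree_X_pow_add_C]
      have hqd : q.natDegree ≤ k + 2 := by
        refine (natDegree_sub_le _ _).trans ?_
        simp only [max_le_iff]
        refine ⟨hRdeg k, (natDegree_C_mul_le _ _).trans ((hRdeg (k % 2)).trans ?_)⟩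
        have := Nat.mod_lt k (show 0 < 2 by norm_num)
        omega
      rw [hW, hWdeg] at hqd
      omega
  have hRne : ∀ k, R k ≠ 0 := by
    intro k h
    exact hRI0 k (by simp [evC, h])
  -- orthogonality of low-degree polys against R m
  have horthR : ∀ (q : Polynomial ℝ) (m : ℕ), 2 ≤ m → q.natDegree + 2 < m →
      ∫ x, q.eval x * (R m).eval x ∂μ = 0 := by
    intro q m hm2 hdeg
    rw [hRn m hm2]
    have hsplit : (fun x => q.eval x * (P (m+2) + C (A m) * P m + C (B m) * P (m-2)).eval x)
        = fun x => (q.eval x * (P (m+2)).eval x + A m * (q.eval x * (P m).eval x))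
            + B m * (q.eval x * (P (m-2)).eval x) := by
      funext x; simp only [eval_add, eval_mul, eval_C]; ring
    rw [hsplit]
    have i1 : Integrable (fun x => q.eval x * (P (m+2)).eval x) μ := by
      simpa using hint (q * P (m+2))
    have i2 : Integrable (fun x => A m * (q.eval x * (P m).eval x)) μ := by
      exact (by simpa using hint (q * P m) : Integrable (fun x => q.eval x * (P m).eval x) μ).const_mul _
    have i3 : Integrable (fun x => B m * (q.eval x * (P (m-2)).eval x)) μ := by
      exact (by simpa using hint (q * P (m-2)) : Integrable (fun x => q.eval x * (P (m-2)).eval x) μ).const_mul _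
    have i12 : Integrable (fun x => q.eval x * (P (m+2)).eval x
        + A m * (q.eval x * (P m).eval x)) μ := by
      exact i1.add i2
    rw [integral_add i12 i3, integral_add i1 i2,
      MeasureTheory.integral_const_mul, MeasureTheory.integral_const_mul]
    have o1 := orthP hint P hPmonic hPdeg hPorth q.natDegree q le_rfl (m+2) (by omega)
    have o2 := orthP hint P hPmonic hPdeg hPorth q.natDegree q le_rfl m (by omega)
    have o3 := orthP hint P hPmonic hPdeg hPorth q.natDegree q le_rfl (m-2) (by omega)
    rw [o1, o2, o3]
    ring
  -- J k m = 0 for k < m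
  have hJlt : ∀ k m, k < m → ∫ x, (R k).eval x * (R m).eval x / (1+x^2)^2 ∂μ = 0 := by
    intro k m hkm
    rcases Nat.eq_zero_or_pos k with hk0 | hk1
    · subst hk0
      rw [hR0]
      simp only [eval_one, one_mul]
      exact hRii m (by omega)
    · obtain ⟨u, W, hWeq, hWd⟩ := hdec k hk1
      have hsplit : (fun x => (R k).eval x * (R m).eval x / (1+x^2)^2)
          = fun x => u * ((R (k % 2)).eval x * (R m).eval x / (1+x^2)^2)
              + (W * R m).eval x := by
        funext x
        have hx : ((1:ℝ)+x^2)^2 ≠ 0 := by positivity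
        have hev : (R k).eval x = u * (R (k % 2)).eval x + (1+x^2)^2 * W.eval x := by
          conv_lhs => rw [hWeq]
          simp [eval_add, eval_mul, eval_pow]
        rw [hev, eval_mul]
        field_simp
      rw [hsplit]
      have i1 : Integrable (fun x => u * ((R (k % 2)).eval x * (R m).eval x / (1+x^2)^2)) μ := by
        exact (by simpa [eval_mul] using intRat hint (R (k % 2) * R m) :
          Integrable (fun x => (R (k % 2)).eval x * (R m).eval x / (1+x^2)^2) μ).const_mul _
      have i2 : Integrable (fun x => (W * R m).eval x) μ := hint _
      rw [integral_add i1 i2, MeasureTheory.integral_const_mul]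
      have hfirst : ∫ x, (R (k % 2)).eval x * (R m).eval x / (1+x^2)^2 ∂μ = 0 := by
        rcases Nat.mod_two_eq_zero_or_one k with h | h
        · rw [h, hR0]
          simp only [eval_one, one_mul]
          exact hRii m (by omega)
        · rw [h]
          exact hRiii m (by omega)
      have hsecond : ∫ x, (W * R m).eval x ∂μ = 0 := by
        rcases hWd with h | h
        · simp [h]
        · have : (fun x => (W * R m).eval x) = fun x => W.eval x * (R m).eval x := by
            funext x; simp [eval_mul]
          rw [this]
          exact horthR W m (by omega) (by omega)
      rw [hfirst, hsecond, mul_zero, zero_add]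
  -- symmetry
  have hJsym : ∀ k m, ∫ x, (R k).eval x * (R m).eval x / (1+x^2)^2 ∂μ
      = ∫ x, (R m).eval x * (R k).eval x / (1+x^2)^2 ∂μ := by
    intro k m
    apply integral_congr_ae
    exact Filter.Eventually.of_forall fun x => by ring
  -- positivity
  have hJne : ∀ m, ∫ x, (R m).eval x * (R m).eval x / (1+x^2)^2 ∂μ ≠ 0 := by
    intro m h0
    have hnn : 0 ≤ fun x => (R m).eval x * (R m).eval x / ((1:ℝ)+x^2)^2 := by
      intro x
      have : (0:ℝ) ≤ (R m).eval x * (R m).eval x := mul_self_nonneg _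
      positivity
    have hintg : Integrable (fun x => (R m).eval x * (R m).eval x / (1+x^2)^2) μ := by
      simpa [eval_mul] using intRat hint (R m * R m)
    have hae := (MeasureTheory.integral_eq_zero_iff_of_nonneg hnn hintg).mp h0
    -- the set where f ≠ 0 is null
    have hnull : μ {x | (R m).eval x ≠ 0} = 0 := by
      have : {x : ℝ | (R m).eval x ≠ 0} ⊆ {x | (R m).eval x * (R m).eval x / ((1:ℝ)+x^2)^2 ≠ 0} := by
        intro x hx
        have hx2 : ((1:ℝ)+x^2)^2 ≠ 0 := by positivity
        exact div_ne_zero (mul_ne_zero hx hx) hx2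
      refine measure_mono_null this ?_
      have := Filter.eventuallyEq_iff_exists_mem.mp hae
      exact hae
    -- roots are finite
    have hroots : {x : ℝ | (R m).IsRoot x}.Finite := Polynomial.finite_setOf_isRoot (hRne m)
    obtain ⟨x₀, hx₀s, hx₀r⟩ : ∃ x₀, x₀ ∈ measSupport μ ∧ x₀ ∉ {x : ℝ | (R m).IsRoot x} := by
      have := (hsupp.diff hroots).nonempty
      obtain ⟨x₀, hx₀⟩ := this
      exact ⟨x₀, hx₀.1, hx₀.2⟩
    have hopen : {x : ℝ | (R m).IsRoot x}ᶜ ∈ nhds x₀ :=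
      (hroots.isClosed.isOpen_compl).mem_nhds hx₀r
    exact hx₀s _ hopen (by
      refine measure_mono_null ?_ hnull
      intro x hx
      exact hx)
  have hD : ∀ n, Dpoly R n = C (cconst R (n+1)) * (R n).map (algebraMap ℝ ℂ)
      + C (cconst R n) * ((R (n+2)).map (algebraMap ℝ ℂ)) := by
    intro n
    rw [Dpoly, Matrix.det_fin_three]
    simp only [Matrix.cons_val', Matrix.cons_val_zero, Matrix.cons_val_one, Matrix.head_cons,
      Matrix.empty_val', Matrix.cons_val_fin_one, Matrix.head_fin_const, Matrix.cons_val_two,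
      Matrix.tail_cons, Matrix.of_apply]
    rw [cconst, cconst]
    rw [hEvNeg n Complex.I, hEvNeg (n+1) Complex.I, hEvNeg (n+2) Complex.I]
    rw [show ((-1:ℂ))^(n+1) = (-1)^n * (-1) from pow_succ _ _,
      show ((-1:ℂ))^(n+2) = (-1)^n * (-1) * (-1) by rw [pow_succ, pow_succ]]
    simp only [map_mul, map_sub, map_neg, map_pow, map_one]
    ring
  have hcc : ∀ k, (starRingEnd ℂ) (cconst R k) = - cconst R k := by
    intro k
    have e : ∀ j, (starRingEnd ℂ) (evC (R j) Complex.I) = evC (R j) (-Complex.I) :=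
      fun j => (hconjI _).symm
    have e' : ∀ j, (starRingEnd ℂ) (evC (R j) (-Complex.I)) = evC (R j) Complex.I := by
      intro j; rw [hconjI, Complex.conj_conj]
    simp only [cconst, map_sub, map_mul, e, e']
    ring
  have hid : ∀ n, ∃ t : ℝ, t ≠ 0 ∧ (1+X^2)^2 * S n = C t * R n + R (n+2) := by
    intro n
    have ht0 : (starRingEnd ℂ) (cconst R (n+1) / cconst R n) = cconst R (n+1) / cconst R n := by
      rw [map_div₀, hcc, hcc, neg_div_neg_eq]
    obtain ⟨t, ht⟩ := Complex.conj_eq_iff_real.mp ht0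
    have htne : t ≠ 0 := by
      intro h
      rw [h] at ht
      push_cast at ht
      exact hc (n+1) ((div_eq_zero_iff.mp ht).resolve_right (hc n))
    have hmul : cconst R n * (t:ℂ) = cconst R (n+1) := by
      rw [← ht, mul_comm, div_mul_cancel₀ _ (hc n)]
    have h1 : C (cconst R n) * ((1+X^2)^2 * (S n).map (algebraMap ℝ ℂ))
        = C (cconst R n) * (C (t:ℂ) * (R n).map (algebraMap ℝ ℂ)
            + (R (n+2)).map (algebraMap ℝ ℂ)) := by
      rw [← mul_assoc, hS n, hD n, ← hmul, map_mul]
      ring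
    have h2 := mul_left_cancel₀ (Polynomial.C_ne_zero.mpr (hc n)) h1
    have h3 : ((1+X^2)^2 * S n : Polynomial ℝ).map (algebraMap ℝ ℂ)
        = ((C t * R n + R (n+2) : Polynomial ℝ)).map (algebraMap ℝ ℂ) := by
      rw [Polynomial.map_mul, Polynomial.map_pow, Polynomial.map_add, Polynomial.map_one,
        Polynomial.map_pow, Polynomial.map_X, Polynomial.map_add, Polynomial.map_mul, map_C]
      exact h2
    exact ⟨t, htne, Polynomial.map_injective _ ((algebraMap ℝ ℂ).injective) h3⟩
  intro n m
  obtain ⟨t, htne, hiden⟩ := hid n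
  have hkey : ∫ x, (S n).eval x * (R m).eval x ∂μ
      = t * (∫ x, (R n).eval x * (R m).eval x / (1+x^2)^2 ∂μ)
        + ∫ x, (R (n+2)).eval x * (R m).eval x / (1+x^2)^2 ∂μ := by
    have hsplit : (fun x => (S n).eval x * (R m).eval x)
        = fun x => t * ((R n).eval x * (R m).eval x / (1+x^2)^2)
            + (R (n+2)).eval x * (R m).eval x / (1+x^2)^2 := by
      funext x
      have hx : ((1:ℝ)+x^2)^2 ≠ 0 := by positivity
      have hev := congrArg (Polynomial.eval x) hiden
      simp only [eval_mul, eval_add, eval_pow, eval_one, eval_X, eval_C] at hev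
      field_simp
      linear_combination (R m).eval x * hev
    rw [hsplit, integral_add ((by simpa [eval_mul] using intRat hint (R n * R m) :
        Integrable (fun x => (R n).eval x * (R m).eval x / (1+x^2)^2) μ).const_mul t)
      (by simpa [eval_mul] using intRat hint (R (n+2) * R m)), MeasureTheory.integral_const_mul]
  constructor
  · intro hcase
    rcases hcase with h | h | h
    · rw [hkey, hJsym n m, hJlt m n h, hJsym (n+2) m, hJlt m (n+2) (by omega)]
      ring
    · subst h
      rw [hkey, hJlt n (n+1) (by omega), hJsym (n+2) (n+1), hJlt (n+1) (n+2) (by omega)]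
      ring
    · rw [hkey, hJlt n m (by omega), hJlt (n+2) m (by omega)]
      ring
  · intro hcase
    rcases hcase with h | h
    · subst h
      rw [hkey, hJsym (m+2) m, hJlt m (m+2) (by omega), add_zero]
      exact mul_ne_zero htne (hJne m)
    · subst h
      rw [hkey, hJlt n (n+2) (by omega), mul_zero, zero_add]
      exact hJne (n+2)
end

section
/- Modified Christoffel formula: for every n ≥ 1, P_n(x) = S_n(x) + ρ_n S_{n−2}(x); equivalently, (1+x²)² P_n(x) = c_n^{−1} D_n(x) + ρ_n c_{n−2}^{−1} D_{n−2}(x) in ℂ[x]. -/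
open MeasureTheory Polynomial

/-- The coefficients ρ_n: ρ_n = 0 for n ≤ 2, and for n ≥ 3,
ρ_n = -(∫ x S_n dμ)/(∫ x S_{n-2} dμ) for odd n and
ρ_n = -(∫ x² S_n dμ)/(∫ x² S_{n-2} dμ) for even n. -/
noncomputable def rho (μ : Measure ℝ) (S : ℕ → Polynomial ℝ) (n : ℕ) : ℝ :=
  if n ≤ 2 then 0
  else if Odd n then
    -(∫ x, x * (S n).eval x ∂μ) / (∫ x, x * (S (n-2)).eval x ∂μ)
  else
    -(∫ x, x^2 * (S n).eval x ∂μ) / (∫ x, x^2 * (S (n-2)).eval x ∂μ)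


namespace Stmt9Aux

/-- parity at the polynomial level from parity of evaluations -/
lemma comp_neg_of_parity {p : Polynomial ℝ} {c : ℝ}
    (h : ∀ x : ℝ, p.eval (-x) = c * p.eval x) : p.comp (-X) = C c * p := by
  apply Polynomial.funext
  intro x
  simp [Polynomial.eval_comp, h x]

lemma cubic_decomp {p : Polynomial ℝ} (h : p.natDegree ≤ 3) :
    p = C (p.coeff 0) + C (p.coeff 1) * X + C (p.coeff 2) * X^2 + C (p.coeff 3) * X^3 := by
  ext n
  rcases n with _|_|_|_|n
  · simp
  · simp [Polynomial.coeff_X]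
  · simp [Polynomial.coeff_X_pow]
  · simp [Polynomial.coeff_X_pow]
  · have h0 : p.coeff (n+4) = 0 := Polynomial.coeff_eq_zero_of_natDegree_lt (by omega)
    simp [h0, Polynomial.coeff_X_pow, Polynomial.coeff_X]

lemma qmonic : ((1 + X^2) : Polynomial ℝ).Monic := by
  have h1 : ((1:Polynomial ℝ) + X^2) = X^2 + 1 := by ring
  rw [h1]
  exact (monic_X_pow 2).add_of_left (by simp [Polynomial.degree_X_pow])

lemma gmonic : ((1 + X^2)^2 : Polynomial ℝ).Monic := qmonic.pow 2

lemma gnatDegree : ((1 + X^2)^2 : Polynomial ℝ).natDegree = 4 := by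
  have hd : ((1 + X^2 : Polynomial ℝ)).natDegree = 2 := by
    have h2 : ((1:Polynomial ℝ) + X^2) = X^2 + 1 := by ring
    rw [h2, natDegree_add_eq_left_of_degree_lt (by simp [Polynomial.degree_X_pow])]
    simp
  rw [qmonic.natDegree_pow, hd]

variable {μ : Measure ℝ}

lemma integral_odd (hsymm : μ.map (fun x => -x) = μ)
    {f : ℝ → ℝ} (hf : Continuous f) (hodd : ∀ x, f (-x) = - f x)
    (hi : Integrable f μ) : ∫ x, f x ∂μ = 0 := by
  have h1 : ∫ x, f x ∂μ = ∫ x, f (-x) ∂μ := by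
    conv_lhs => rw [← hsymm]
    rw [integral_map (measurable_neg.aemeasurable) (hf.aestronglyMeasurable)]
  have h2 : ∫ x, f (-x) ∂μ = - ∫ x, f x ∂μ := by
    simp only [hodd]
    exact integral_neg f
  linarith [h1, h2]

lemma poly_eq_zero_of_integral_sq
    (hsupp : (measSupport μ).Infinite)
    (hint : ∀ p : Polynomial ℝ, Integrable (fun x => p.eval x) μ)
    {p : Polynomial ℝ} (h : ∫ x, (p.eval x)^2 ∂μ = 0) : p = 0 := by
  by_contra hp
  have hi : Integrable (fun x => (p.eval x)^2) μ := by
    have h2 := hint (p^2)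
    have : (fun x => (p^2).eval x) = fun x => (p.eval x)^2 := by
      funext x; simp [Polynomial.eval_pow]
    rwa [this] at h2
  have hae : (fun x => (p.eval x)^2) =ᵐ[μ] 0 :=
    (integral_eq_zero_iff_of_nonneg (fun x => sq_nonneg _) hi).mp h
  have hm : μ {x | p.eval x ≠ 0} = 0 := by
    rw [Filter.EventuallyEq, ae_iff] at hae
    convert hae using 3 with x
    simp [pow_eq_zero_iff]
  have hsub : measSupport μ ⊆ {x | p.IsRoot x} := by
    intro x hx
    by_contra hroot
    exact hx {y | p.eval y ≠ 0}
      (IsOpen.mem_nhds (isOpen_ne.preimage (Polynomial.continuous p)) hroot) hm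
  exact (hsupp.mono hsub) (Polynomial.finite_setOf_isRoot hp)

lemma integrable_div4 (hint : ∀ p : Polynomial ℝ, Integrable (fun x => p.eval x) μ)
    (p : Polynomial ℝ) :
    Integrable (fun x => p.eval x / (1+x^2)^2) μ := by
  have hden : ∀ x : ℝ, (1:ℝ) ≤ (1+x^2)^2 := by
    intro x; nlinarith [sq_nonneg x, sq_nonneg (x^2)]
  refine (hint p).mono (Continuous.aestronglyMeasurable ?_) (Filter.Eventually.of_forall ?_)
  · exact (Polynomial.continuous p).div (by continuity) (fun x => by positivity)
  · intro x
    simp only [Real.norm_eq_abs, abs_div]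
    have : |(1+x^2)^2| = (1+x^2)^2 := abs_of_nonneg (by positivity)
    rw [this]
    exact div_le_self (abs_nonneg _) (hden x)

end Stmt9Aux
set_option maxHeartbeats 2000000 in
/-- Theorem 4.6, the modified Christoffel formula: for n ≥ 1,
P_n = S_n + ρ_n S_{n-2}; equivalently
(1+x²)² P_n(x) = c_n⁻¹ D_n(x) + ρ_n c_{n-2}⁻¹ D_{n-2}(x). -/
theorem stmt_9
    (μ : Measure ℝ)
    (hsymm : μ.map (fun x => -x) = μ)
    (hsupp : (measSupport μ).Infinite)
    (hint : ∀ p : Polynomial ℝ, Integrable (fun x => p.eval x) μ)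
    (P : ℕ → Polynomial ℝ)
    (hPmonic : ∀ n, (P n).Monic)
    (hPdeg : ∀ n, (P n).natDegree = n)
    (hPorth : ∀ m n, m ≠ n → ∫ x, (P m).eval x * (P n).eval x ∂μ = 0)
    (hPparity : ∀ n x, (P n).eval (-x) = (-1 : ℝ)^n * (P n).eval x)
    (A B : ℕ → ℝ) (R : ℕ → Polynomial ℝ)
    (hR0 : R 0 = 1)
    (hR1 : R 1 = P 3 + Polynomial.C (A 1) * P 1)
    (hRn : ∀ n, 2 ≤ n →
      R n = P (n+2) + Polynomial.C (A n) * P n + Polynomial.C (B n) * P (n-2))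
    (hRi : ∀ n, 1 ≤ n → devC (R n) Complex.I = 0)
    (hRii : ∀ n, 1 ≤ n → ∫ x, (R n).eval x / (1+x^2)^2 ∂μ = 0)
    (hRiii : ∀ n, 2 ≤ n → ∫ x, (R 1).eval x * (R n).eval x / (1+x^2)^2 ∂μ = 0)
    (S : ℕ → Polynomial ℝ)
    (hc : ∀ n, cconst R n ≠ 0)
    (hS : ∀ n, Polynomial.C (cconst R n) * ((1 + Polynomial.X^2)^2)
            * ((S n).map (algebraMap ℝ ℂ)) = Dpoly R n)
    :
    ∀ n : ℕ, 1 ≤ n →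
      P n = S n + Polynomial.C (rho μ S n) * S (n-2) ∧
      ((1 + Polynomial.X^2)^2 : Polynomial ℂ) * ((P n).map (algebraMap ℝ ℂ))
        = Polynomial.C (cconst R n)⁻¹ * Dpoly R n
          + Polynomial.C ((rho μ S n : ℝ) : ℂ)
            * (Polynomial.C (cconst R (n-2))⁻¹ * Dpoly R (n-2)) := by
  classical
  have hP0 : P 0 = 1 := (hPmonic 0).natDegree_eq_zero.mp (hPdeg 0)
  have hintmul : ∀ p q : Polynomial ℝ, Integrable (fun x => p.eval x * q.eval x) μ := by
    intro p q
    have h := hint (p*q)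
    have e : (fun x => (p*q).eval x) = fun x => p.eval x * q.eval x := by
      funext x; simp
    rwa [e] at h
  have hPdegree : ∀ m, (P m).degree = (m : WithBot ℕ) := by
    intro m
    rw [Polynomial.degree_eq_natDegree (hPmonic m).ne_zero, hPdeg]
  have hCP : ∀ (a : ℝ) (m : ℕ), (Polynomial.C a * P m).degree ≤ (m : WithBot ℕ) := by
    intro a m
    refine le_trans (Polynomial.degree_mul_le _ _) ?_
    rw [hPdegree]
    refine le_trans (add_le_add Polynomial.degree_C_le le_rfl) ?_
    simp
  have hcast : ∀ a b : ℕ, a < b → ((a:WithBot ℕ) < (b:WithBot ℕ)) := by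
    intro a b h; exact_mod_cast h
  have hRparity : ∀ n x, (R n).eval (-x) = (-1:ℝ)^n * (R n).eval x := by
    intro n x
    match n, le_or_gt 2 n with
    | 0, _ => simp [hR0]
    | 1, _ => simp [hR1, hPparity 3, hPparity 1]; ring
    | (n+2), _ =>
      rw [hRn (n+2) (by omega)]
      have h2 : (n+2) - 2 = n := by omega
      simp only [Polynomial.eval_add, Polynomial.eval_mul, Polynomial.eval_C, h2,
        hPparity (n+2+2), hPparity (n+2), hPparity n]
      have e1 : (-1:ℝ)^(n+2+2) = (-1)^(n+2) := by rw [pow_add]; ring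
      have e2 : (-1:ℝ)^n = (-1)^(n+2) := by rw [pow_add]; ring
      rw [e1, e2]; ring
  have hRmonic : ∀ n, (R n).Monic := by
    intro n
    match n with
    | 0 => rw [hR0]; exact monic_one
    | 1 =>
      rw [hR1]
      exact (hPmonic 3).add_of_left (lt_of_le_of_lt (hCP _ 1) (by rw [hPdegree]; exact hcast 1 3 (by omega)))
    | (n+2) =>
      rw [hRn (n+2) (by omega), add_assoc]
      refine (hPmonic (n+2+2)).add_of_left ?_
      refine lt_of_le_of_lt (Polynomial.degree_add_le _ _) ?_
      rw [max_lt_iff, hPdegree]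
      constructor
      · exact lt_of_le_of_lt (hCP _ _) (hcast _ _ (by omega))
      · exact lt_of_le_of_lt (hCP _ _) (hcast _ _ (by omega))
  have hRdeg : ∀ n, 1 ≤ n → (R n).natDegree = n + 2 := by
    intro n hn
    match n, hn with
    | 1, _ =>
      rw [hR1, Polynomial.natDegree_add_eq_left_of_degree_lt
        (lt_of_le_of_lt (hCP _ 1) (by rw [hPdegree]; exact hcast 1 3 (by omega))), hPdeg]
    | (n+2), _ =>
      rw [hRn (n+2) (by omega), add_assoc, Polynomial.natDegree_add_eq_left_of_degree_lt ?_, hPdeg]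
      refine lt_of_le_of_lt (Polynomial.degree_add_le _ _) ?_
      rw [max_lt_iff, hPdegree]
      exact ⟨lt_of_le_of_lt (hCP _ _) (hcast _ _ (by omega)),
        lt_of_le_of_lt (hCP _ _) (hcast _ _ (by omega))⟩
  have hPorth' : ∀ d (q : Polynomial ℝ), q.natDegree ≤ d → ∀ m, d < m →
      ∫ x, (P m).eval x * q.eval x ∂μ = 0 := by
    intro d
    induction d with
    | zero =>
      intro q hq m hm
      have hqc : q = Polynomial.C (q.coeff 0) := Polynomial.eq_C_of_natDegree_le_zero hq
      have h0 : ∫ x, (P m).eval x ∂μ = 0 := by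
        have := hPorth m 0 (by omega)
        simpa [hP0] using this
      rw [hqc]
      simp only [Polynomial.eval_C]
      rw [integral_mul_const, h0, zero_mul]
    | succ d ih =>
      intro q hq m hm
      set a := q.coeff (d+1) with ha
      set q' := q - Polynomial.C a * P (d+1) with hq'def
      have hdq' : q'.natDegree ≤ d := by
        refine Polynomial.natDegree_le_iff_coeff_eq_zero.mpr fun N hN => ?_
        rw [hq'def]
        by_cases hN1 : N = d+1
        · subst hN1
          have hc : (P (d+1)).coeff (d+1) = 1 := by
            have := (hPmonic (d+1)).coeff_natDegree
            rwa [hPdeg] at this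
          simp [Polynomial.coeff_sub, Polynomial.coeff_C_mul, hc, ha]
        · have h1 : q.coeff N = 0 := Polynomial.coeff_eq_zero_of_natDegree_lt (by omega)
          have h2 : (P (d+1)).coeff N = 0 := Polynomial.coeff_eq_zero_of_natDegree_lt (by rw [hPdeg]; omega)
          simp [Polynomial.coeff_sub, Polynomial.coeff_C_mul, h1, h2]
      have e1 : q = q' + Polynomial.C a * P (d+1) := by rw [hq'def]; ring
      rw [e1]
      have e2 : (fun x => (P m).eval x * (q' + Polynomial.C a * P (d+1)).eval x)
          = fun x => (P m).eval x * q'.eval x + a * ((P m).eval x * (P (d+1)).eval x) := by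
        funext x; simp only [Polynomial.eval_add, Polynomial.eval_mul, Polynomial.eval_C]; ring
      rw [e2, integral_add (hintmul _ _) ((hintmul (P m) (P (d+1))).const_mul a),
        integral_const_mul, ih q' hdq' m (by omega), hPorth m (d+1) (by omega), zero_add, mul_zero]
  have hRorth : ∀ m, 2 ≤ m → ∀ h : Polynomial ℝ, h.natDegree + 3 ≤ m →
      ∫ x, (R m).eval x * h.eval x ∂μ = 0 := by
    intro m hm h hh
    rw [hRn m hm]
    have e : (fun x => (P (m+2) + Polynomial.C (A m) * P m + Polynomial.C (B m) * P (m-2)).eval x * h.eval x)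
        = fun x => ((P (m+2)).eval x * h.eval x + A m * ((P m).eval x * h.eval x))
            + B m * ((P (m-2)).eval x * h.eval x) := by
      funext x
      simp only [Polynomial.eval_add, Polynomial.eval_mul, Polynomial.eval_C]
      ring
    have I1 : Integrable (fun x => (P (m+2)).eval x * h.eval x) μ := hintmul _ _
    have I2 : Integrable (fun x => A m * ((P m).eval x * h.eval x)) μ := (hintmul _ _).const_mul _
    have I3 : Integrable (fun x => B m * ((P (m-2)).eval x * h.eval x)) μ := (hintmul _ _).const_mul _
    have I12 : Integrable (fun x => (P (m+2)).eval x * h.eval x + A m * ((P m).eval x * h.eval x)) μ := by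
      exact I1.add I2
    rw [e, integral_add I12 I3, integral_add I1 I2, integral_const_mul, integral_const_mul,
      hPorth' h.natDegree h le_rfl (m+2) (by omega), hPorth' h.natDegree h le_rfl m (by omega),
      hPorth' h.natDegree h le_rfl (m-2) (by omega)]
    ring
  have hRcomp : ∀ n, (R n).comp (-X) = Polynomial.C ((-1:ℝ)^n) * R n :=
    fun n => Stmt9Aux.comp_neg_of_parity (hRparity n)
  have hRparC : ∀ n, evC (R n) (-Complex.I) = (-1:ℂ)^n * evC (R n) Complex.I := by
    intro n
    have h1 := congrArg (Polynomial.map (algebraMap ℝ ℂ)) (hRcomp n)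
    rw [Polynomial.map_comp, Polynomial.map_mul, Polynomial.map_C] at h1
    have h2 : ((-X : Polynomial ℝ).map (algebraMap ℝ ℂ)) = -X := by simp
    rw [h2] at h1
    have h3 := congrArg (Polynomial.eval Complex.I) h1
    rw [Polynomial.eval_comp] at h3
    simpa [evC, Polynomial.eval_mul] using h3
  have hD : ∀ n, Dpoly R n
      = Polynomial.C (cconst R (n+1)) * ((R n).map (algebraMap ℝ ℂ))
        + Polynomial.C (cconst R n) * ((R (n+2)).map (algebraMap ℝ ℂ)) := by
    intro n
    rw [Dpoly, Matrix.det_fin_three]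
    simp only [Matrix.of_apply, Matrix.cons_val_zero, Matrix.cons_val_one, Matrix.head_cons,
      Matrix.cons_val_two, Matrix.tail_cons, Matrix.head_fin_const]
    rw [hRparC n, hRparC (n+1), hRparC (n+2)]
    simp only [cconst, hRparC, pow_succ]
    simp only [Polynomial.C_mul, Polynomial.C_neg, Polynomial.C_sub, map_one, map_neg]
    ring
  -- the fundamental identity (star): (1+X²)² Sₙ = R_{n+2} + τₙ Rₙ over ℝ
  have hstar : ∀ n, ∃ τ : ℝ, ((1+X^2)^2 : Polynomial ℝ) * S n = R (n+2) + Polynomial.C τ * R n := by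
    intro n
    have h1 := hS n
    rw [hD n] at h1
    set u : Polynomial ℝ := ((1+X^2)^2 : Polynomial ℝ) * S n - R (n+2) with hu
    have hmapu : u.map (algebraMap ℝ ℂ)
        = ((1+X^2)^2 : Polynomial ℂ) * (S n).map (algebraMap ℝ ℂ) - (R (n+2)).map (algebraMap ℝ ℂ) := by
      rw [hu, Polynomial.map_sub, Polynomial.map_mul, Polynomial.map_pow, Polynomial.map_add,
        Polynomial.map_one, Polynomial.map_pow, Polynomial.map_X]
    have h2 : Polynomial.C (cconst R n) * (u.map (algebraMap ℝ ℂ))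
        = Polynomial.C (cconst R (n+1)) * ((R n).map (algebraMap ℝ ℂ)) := by
      rw [hmapu]
      rw [mul_sub]
      rw [show Polynomial.C (cconst R n) * (((1+X^2)^2 : Polynomial ℂ) * (S n).map (algebraMap ℝ ℂ))
          = Polynomial.C (cconst R n) * ((1+X^2)^2 : Polynomial ℂ) * (S n).map (algebraMap ℝ ℂ) by ring]
      rw [h1]
      ring
    set d := (R n).natDegree with hd
    have hcoeffR : (R n).coeff d = 1 := (hRmonic n).coeff_natDegree
    have h3 := congrArg (fun p => Polynomial.coeff p d) h2
    simp only [Polynomial.coeff_C_mul, Polynomial.coeff_map, hcoeffR, map_one, mul_one] at h3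
    -- h3 : cconst R n * algebraMap ℝ ℂ (u.coeff d) = cconst R (n+1)
    refine ⟨u.coeff d, ?_⟩
    have h4 : u.map (algebraMap ℝ ℂ) = (Polynomial.C (u.coeff d) * R n).map (algebraMap ℝ ℂ) := by
      have h5 : Polynomial.C (cconst R n) * (u.map (algebraMap ℝ ℂ))
          = Polynomial.C (cconst R n) * ((Polynomial.C (u.coeff d) * R n).map (algebraMap ℝ ℂ)) := by
        rw [h2, Polynomial.map_mul, Polynomial.map_C, ← h3]
        rw [Polynomial.C_mul]
        ring
      exact mul_left_cancel₀ (Polynomial.C_ne_zero.mpr (hc n)) h5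
    have h6 : u = Polynomial.C (u.coeff d) * R n :=
      Polynomial.map_injective (algebraMap ℝ ℂ) (algebraMap ℝ ℂ).injective h4
    rw [hu] at h6
    rw [sub_eq_iff_eq_add] at h6
    rw [h6]; ring
  -- S n is monic of degree n
  have hSmd : ∀ n, (S n).Monic ∧ (S n).natDegree = n := by
    intro n
    obtain ⟨τ, hτ⟩ := hstar n
    have hRHSmonic : (R (n+2) + Polynomial.C τ * R n).Monic := by
      refine (hRmonic (n+2)).add_of_left ?_
      refine lt_of_le_of_lt (Polynomial.degree_mul_le _ _) ?_
      refine lt_of_le_of_lt (add_le_add Polynomial.degree_C_le le_rfl) ?_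
      rw [zero_add, Polynomial.degree_eq_natDegree (hRmonic n).ne_zero,
        Polynomial.degree_eq_natDegree (hRmonic (n+2)).ne_zero, hRdeg (n+2) (by omega)]
      have hle : (R n).natDegree ≤ n + 2 := by
        rcases Nat.eq_zero_or_pos n with h0 | h0
        · subst h0; rw [hR0]; simp
        · rw [hRdeg n h0]
      exact hcast _ _ (by omega)
    have hRHSdeg : (R (n+2) + Polynomial.C τ * R n).natDegree = n + 4 := by
      rw [Polynomial.natDegree_add_eq_left_of_degree_lt, hRdeg (n+2) (by omega)]
      refine lt_of_le_of_lt (Polynomial.degree_mul_le _ _) ?_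
      refine lt_of_le_of_lt (add_le_add Polynomial.degree_C_le le_rfl) ?_
      rw [zero_add, Polynomial.degree_eq_natDegree (hRmonic n).ne_zero,
        Polynomial.degree_eq_natDegree (hRmonic (n+2)).ne_zero, hRdeg (n+2) (by omega)]
      have hle : (R n).natDegree ≤ n + 2 := by
        rcases Nat.eq_zero_or_pos n with h0 | h0
        · subst h0; rw [hR0]; simp
        · rw [hRdeg n h0]
      exact hcast _ _ (by omega)
    rw [← hτ] at hRHSmonic hRHSdeg
    have hSne : S n ≠ 0 := by
      intro h0
      rw [h0, mul_zero] at hRHSmonic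
      exact (Polynomial.not_monic_zero) hRHSmonic
    constructor
    · have := Stmt9Aux.gmonic.leadingCoeff
      have hne0 : ((1+X^2)^2 : Polynomial ℝ).leadingCoeff * (S n).leadingCoeff ≠ 0 := by
        rw [Stmt9Aux.gmonic.leadingCoeff, one_mul]
        exact Polynomial.leadingCoeff_ne_zero.mpr hSne
      have hlc := Polynomial.leadingCoeff_mul' hne0
      rw [Stmt9Aux.gmonic.leadingCoeff, one_mul] at hlc
      rw [Polynomial.Monic, ← hlc]
      exact hRHSmonic
    · have := Stmt9Aux.gmonic.natDegree_mul' hSne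
      rw [this, Stmt9Aux.gnatDegree] at hRHSdeg
      omega
  -- parity of S n (at the level of evaluations)
  have hSparity : ∀ n x, (S n).eval (-x) = (-1:ℝ)^n * (S n).eval x := by
    intro n x
    obtain ⟨τ, hτ⟩ := hstar n
    have h1 := congrArg (Polynomial.eval (-x)) hτ
    have h2 := congrArg (Polynomial.eval x) hτ
    simp only [Polynomial.eval_mul, Polynomial.eval_pow, Polynomial.eval_add, Polynomial.eval_one,
      Polynomial.eval_X, Polynomial.eval_C] at h1 h2
    rw [hRparity (n+2), hRparity n] at h1
    have e1 : (-1:ℝ)^(n+2) = (-1)^n := by rw [pow_add]; ring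
    rw [e1] at h1
    have hne : ((1:ℝ) + (-x)^2)^2 ≠ 0 := by positivity
    have hxx : ((1:ℝ) + (-x)^2) = 1 + x^2 := by ring
    rw [hxx] at h1
    have h3 : ((1:ℝ)+x^2)^2 * (S n).eval (-x) = ((1:ℝ)+x^2)^2 * ((-1)^n * (S n).eval x) := by
      linear_combination h1 - ((-1:ℝ))^n * h2
    have hne2 : ((1:ℝ) + x^2)^2 ≠ 0 := by positivity
    exact mul_left_cancel₀ hne2 h3
  -- some integrability facts
  have hintx : ∀ j : ℕ, ∀ p : Polynomial ℝ, Integrable (fun x => x^j * p.eval x) μ := by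
    intro j p
    have := hintmul (X^j) p
    simpa using this
  have hintx1 : ∀ p : Polynomial ℝ, Integrable (fun x => x * p.eval x) μ := by
    intro p
    have := hintmul X p
    simpa using this
  -- ∫ Sₙ dμ = 0 for n ≥ 1
  have hSint : ∀ n, 1 ≤ n → ∫ x, (S n).eval x ∂μ = 0 := by
    intro n hn
    obtain ⟨τ, hτ⟩ := hstar n
    have e : (fun x => (S n).eval x)
        = fun x => (R (n+2)).eval x / (1+x^2)^2 + τ * ((R n).eval x / (1+x^2)^2) := by
      funext x
      have h1 := congrArg (Polynomial.eval x) hτ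
      simp only [Polynomial.eval_mul, Polynomial.eval_pow, Polynomial.eval_add,
        Polynomial.eval_one, Polynomial.eval_X, Polynomial.eval_C] at h1
      have hne : ((1:ℝ)+x^2)^2 ≠ 0 := by positivity
      rw [show (R (n+2)).eval x / (1+x^2)^2 + τ * ((R n).eval x / (1+x^2)^2)
          = ((R (n+2)).eval x + τ * (R n).eval x)/(1+x^2)^2 by ring, eq_div_iff hne]
      linear_combination h1
    rw [e, integral_add (Stmt9Aux.integrable_div4 hint _)
      ((Stmt9Aux.integrable_div4 hint _).const_mul τ), integral_const_mul,
      hRii (n+2) (by omega), hRii n hn]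
    ring
  -- ∫ R₁ Sₙ dμ = 0 for n ≥ 2
  have hSR1 : ∀ n, 2 ≤ n → ∫ x, (R 1).eval x * (S n).eval x ∂μ = 0 := by
    intro n hn
    obtain ⟨τ, hτ⟩ := hstar n
    have I1 : Integrable (fun x => (R 1).eval x * (R (n+2)).eval x / (1+x^2)^2) μ := by
      have := Stmt9Aux.integrable_div4 hint (R 1 * R (n+2))
      simpa [Polynomial.eval_mul] using this
    have I2 : Integrable (fun x => (R 1).eval x * (R n).eval x / (1+x^2)^2) μ := by
      have := Stmt9Aux.integrable_div4 hint (R 1 * R n)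
      simpa [Polynomial.eval_mul] using this
    have e : (fun x => (R 1).eval x * (S n).eval x)
        = fun x => (R 1).eval x * (R (n+2)).eval x / (1+x^2)^2
            + τ * ((R 1).eval x * (R n).eval x / (1+x^2)^2) := by
      funext x
      have h1 := congrArg (Polynomial.eval x) hτ
      simp only [Polynomial.eval_mul, Polynomial.eval_pow, Polynomial.eval_add,
        Polynomial.eval_one, Polynomial.eval_X, Polynomial.eval_C] at h1
      have hne : ((1:ℝ)+x^2)^2 ≠ 0 := by positivity
      rw [show (R 1).eval x * (R (n+2)).eval x / (1+x^2)^2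
            + τ * ((R 1).eval x * (R n).eval x / (1+x^2)^2)
          = (R 1).eval x * ((R (n+2)).eval x + τ * (R n).eval x)/(1+x^2)^2 by ring, eq_div_iff hne]
      linear_combination (R 1).eval x * h1
    rw [e, integral_add I1 (I2.const_mul τ), integral_const_mul,
      hRiii (n+2) (by omega), hRiii n hn]
    ring
  -- parity vanishing of moments
  have hmom1 : ∀ m, Even m → ∫ x, x * (S m).eval x ∂μ = 0 := by
    intro m hm
    refine Stmt9Aux.integral_odd hsymm (continuous_id.mul (Polynomial.continuous (S m))) ?_ (hintx1 (S m))
    intro x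
    rw [hSparity m x, hm.neg_one_pow]
    ring
  have hmom3 : ∀ m, Even m → ∫ x, x^3 * (S m).eval x ∂μ = 0 := by
    intro m hm
    refine Stmt9Aux.integral_odd hsymm ((continuous_pow 3).mul (Polynomial.continuous (S m))) ?_ (hintx 3 (S m))
    intro x
    rw [hSparity m x, hm.neg_one_pow]
    ring
  have hmom2 : ∀ m, Odd m → ∫ x, x^2 * (S m).eval x ∂μ = 0 := by
    intro m hm
    refine Stmt9Aux.integral_odd hsymm ((continuous_pow 2).mul (Polynomial.continuous (S m))) ?_ (hintx 2 (S m))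
    intro x
    rw [hSparity m x, hm.neg_one_pow]
    ring
  -- structure of R₁
  obtain ⟨e3, hR1e⟩ : ∃ e3 : ℝ, R 1 = X^3 + Polynomial.C e3 * X := by
    have hdeg : (R 1).natDegree = 3 := hRdeg 1 le_rfl
    have hdec := Stmt9Aux.cubic_decomp (le_of_eq hdeg)
    have h0 : (R 1).coeff 0 = 0 := by
      rw [Polynomial.coeff_zero_eq_eval_zero]
      have := hRparity 1 0
      simp at this
      linarith
    have h3 : (R 1).coeff 3 = 1 := by
      have := (hRmonic 1).coeff_natDegree
      rwa [hdeg] at this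
    have h2 : (R 1).coeff 2 = 0 := by
      have e1 := congrArg (Polynomial.eval (1:ℝ)) hdec
      have e2 := congrArg (Polynomial.eval (-1:ℝ)) hdec
      simp only [Polynomial.eval_add, Polynomial.eval_mul, Polynomial.eval_C,
        Polynomial.eval_X, Polynomial.eval_pow] at e1 e2
      have ep := hRparity 1 1
      norm_num at e1 e2 ep
      linarith
    refine ⟨(R 1).coeff 1, ?_⟩
    rw [hdec, h0, h2, h3]
    simp
    ring
  -- ∫ x³ Sₘ dμ = -e₃ ∫ x Sₘ dμ for m ≥ 2
  have hI3 : ∀ m, 2 ≤ m → ∫ x, x^3 * (S m).eval x ∂μ = - e3 * ∫ x, x * (S m).eval x ∂μ := by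
    intro m hm
    have h1 := hSR1 m hm
    rw [hR1e] at h1
    have e : (fun x => (X^3 + Polynomial.C e3 * X : Polynomial ℝ).eval x * (S m).eval x)
        = fun x => x^3 * (S m).eval x + e3 * (x * (S m).eval x) := by
      funext x
      simp only [Polynomial.eval_add, Polynomial.eval_mul, Polynomial.eval_pow,
        Polynomial.eval_C, Polynomial.eval_X]
      ring
    rw [e, integral_add (hintx 3 (S m)) ((hintx1 (S m)).const_mul e3), integral_const_mul] at h1
    linarith
  -- the reduction lemma: degree ≤ n+1 integrals against Sₙ only see q mod (1+X²)²
  have hgne1 : ((1+X^2)^2 : Polynomial ℝ) ≠ 1 := by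
    intro h
    have := congrArg Polynomial.natDegree h
    rw [Stmt9Aux.gnatDegree, Polynomial.natDegree_one] at this
    omega
  have hred : ∀ n, 1 ≤ n → ∀ q : Polynomial ℝ, q.natDegree ≤ n+1 →
      ∫ x, (S n).eval x * q.eval x ∂μ
        = ∫ x, (S n).eval x * (q %ₘ ((1+X^2)^2)).eval x ∂μ := by
    intro n hn q hq
    obtain ⟨τ, hτ⟩ := hstar n
    have hqd : q %ₘ ((1+X^2)^2) + ((1+X^2)^2 : Polynomial ℝ) * (q /ₘ ((1+X^2)^2)) = q :=
      Polynomial.modByMonic_add_div q _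
    set h : Polynomial ℝ := q /ₘ ((1+X^2)^2) with hh
    set r : Polynomial ℝ := q %ₘ ((1+X^2)^2) with hr
    have hints : ∫ x, (R (n+2)).eval x * h.eval x ∂μ = 0 ∧ ∫ x, (R n).eval x * h.eval x ∂μ = 0 := by
      by_cases h0 : h = 0
      · rw [h0]; simp
      · have hq0 : q ≠ 0 := by
          intro hq0
          apply h0
          rw [hh, hq0, Polynomial.zero_divByMonic]
        have hq4 : 4 ≤ q.natDegree := by
          by_contra hlt
          apply h0
          rw [hh]
          apply (Polynomial.divByMonic_eq_zero_iff Stmt9Aux.gmonic).mpr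
          rw [Polynomial.degree_eq_natDegree hq0,
            Polynomial.degree_eq_natDegree Stmt9Aux.gmonic.ne_zero, Stmt9Aux.gnatDegree]
          exact hcast _ _ (by omega)
        have hdh : h.natDegree = q.natDegree - 4 := by
          rw [hh, Polynomial.natDegree_divByMonic q Stmt9Aux.gmonic, Stmt9Aux.gnatDegree]
        exact ⟨hRorth (n+2) (by omega) h (by omega), hRorth n (by omega) h (by omega)⟩
    have e : (fun x => (S n).eval x * q.eval x)
        = fun x => (S n).eval x * r.eval x
            + ((R (n+2)).eval x * h.eval x + τ * ((R n).eval x * h.eval x)) := by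
      funext x
      have h1 := congrArg (Polynomial.eval x) hτ
      have h2 := congrArg (Polynomial.eval x) hqd
      simp only [Polynomial.eval_mul, Polynomial.eval_add, Polynomial.eval_pow,
        Polynomial.eval_one, Polynomial.eval_X, Polynomial.eval_C] at h1 h2
      linear_combination (- (S n).eval x) * h2 + (h.eval x) * h1
    have I1 : Integrable (fun x => (S n).eval x * r.eval x) μ := hintmul _ _
    have I2 : Integrable (fun x => (R (n+2)).eval x * h.eval x) μ := hintmul _ _
    have I3 : Integrable (fun x => τ * ((R n).eval x * h.eval x)) μ := (hintmul _ _).const_mul τ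
    have I23 : Integrable (fun x => (R (n+2)).eval x * h.eval x + τ * ((R n).eval x * h.eval x)) μ := by
      exact I2.add I3
    rw [e, integral_add I1 I23, integral_add I2 I3, integral_const_mul, hints.1, hints.2]
    ring
  -- the moment expansion for cubic remainders
  have hmomr : ∀ m : ℕ, ∀ r : Polynomial ℝ, r.natDegree ≤ 3 →
      ∫ x, (S m).eval x * r.eval x ∂μ
        = r.coeff 0 * (∫ x, (S m).eval x ∂μ) + r.coeff 1 * (∫ x, x * (S m).eval x ∂μ)
          + r.coeff 2 * (∫ x, x^2 * (S m).eval x ∂μ)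
          + r.coeff 3 * (∫ x, x^3 * (S m).eval x ∂μ) := by
    intro m r hr
    have hdec := Stmt9Aux.cubic_decomp hr
    have e : (fun x => (S m).eval x * r.eval x)
        = fun x => r.coeff 0 * (S m).eval x + (r.coeff 1 * (x * (S m).eval x)
            + (r.coeff 2 * (x^2 * (S m).eval x) + r.coeff 3 * (x^3 * (S m).eval x))) := by
      funext x
      conv_lhs => rw [hdec]
      simp only [Polynomial.eval_add, Polynomial.eval_mul, Polynomial.eval_pow,
        Polynomial.eval_C, Polynomial.eval_X]
      ring
    have J0 : Integrable (fun x => r.coeff 0 * (S m).eval x) μ := (hint (S m)).const_mul _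
    have J1 : Integrable (fun x => r.coeff 1 * (x * (S m).eval x)) μ := (hintx1 (S m)).const_mul _
    have J2 : Integrable (fun x => r.coeff 2 * (x^2 * (S m).eval x)) μ := (hintx 2 (S m)).const_mul _
    have J3 : Integrable (fun x => r.coeff 3 * (x^3 * (S m).eval x)) μ := (hintx 3 (S m)).const_mul _
    have J23 : Integrable (fun x => r.coeff 2 * (x^2 * (S m).eval x)
        + r.coeff 3 * (x^3 * (S m).eval x)) μ := by exact J2.add J3
    have J123 : Integrable (fun x => r.coeff 1 * (x * (S m).eval x)
        + (r.coeff 2 * (x^2 * (S m).eval x) + r.coeff 3 * (x^3 * (S m).eval x))) μ := by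
      exact J1.add J23
    rw [e, integral_add J0 J123, integral_add J1 J23, integral_add J2 J3,
      integral_const_mul, integral_const_mul, integral_const_mul, integral_const_mul]
    ring
  -- S₁ = X
  have hS1 : S 1 = X := by
    have hm := (hSmd 1).1
    have hd := (hSmd 1).2
    have h0 : (S 1).coeff 0 = 0 := by
      rw [Polynomial.coeff_zero_eq_eval_zero]
      have := hSparity 1 0
      simp at this
      linarith
    rw [hm.eq_X_add_C hd, h0, map_zero, add_zero]
  have hN1 : ∫ x, x * (S 1).eval x ∂μ ≠ 0 := by
    intro h0
    have h1 : ∫ x, ((X : Polynomial ℝ).eval x)^2 ∂μ = 0 := by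
      have e : (fun x : ℝ => ((X : Polynomial ℝ).eval x)^2) = fun x => x * (S 1).eval x := by
        funext x
        rw [hS1]
        simp [sq]
      rw [e]
      exact h0
    exact Polynomial.X_ne_zero (Stmt9Aux.poly_eq_zero_of_integral_sq hsupp hint h1)
  -- non-vanishing of the relevant moments
  have hrmod3 : ∀ q : Polynomial ℝ, (q %ₘ ((1+X^2)^2)).natDegree ≤ 3 := by
    intro q
    have := Polynomial.natDegree_modByMonic_lt q Stmt9Aux.gmonic hgne1
    rw [Stmt9Aux.gnatDegree] at this
    omega
  have hNodd : ∀ m, 2 ≤ m → Odd m → ∫ x, x * (S m).eval x ∂μ ≠ 0 := by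
    intro m hm hodd h0
    have hSm2 : ∫ x, ((S m).eval x)^2 ∂μ = 0 := by
      have e : (fun x => ((S m).eval x)^2) = fun x => (S m).eval x * (S m).eval x := by
        funext x; rw [sq]
      rw [e, hred m (by omega) (S m) (by rw [(hSmd m).2]; omega),
        hmomr m _ (hrmod3 (S m)), hSint m (by omega), hmom2 m hodd, hI3 m hm, h0]
      ring
    exact (hSmd m).1.ne_zero (Stmt9Aux.poly_eq_zero_of_integral_sq hsupp hint hSm2)
  have hNeven : ∀ m, 2 ≤ m → Even m → ∫ x, x^2 * (S m).eval x ∂μ ≠ 0 := by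
    intro m hm heven h0
    have hSm2 : ∫ x, ((S m).eval x)^2 ∂μ = 0 := by
      have e : (fun x => ((S m).eval x)^2) = fun x => (S m).eval x * (S m).eval x := by
        funext x; rw [sq]
      rw [e, hred m (by omega) (S m) (by rw [(hSmd m).2]; omega),
        hmomr m _ (hrmod3 (S m)), hSint m (by omega), hmom1 m heven, hmom3 m heven, h0]
      ring
    exact (hSmd m).1.ne_zero (Stmt9Aux.poly_eq_zero_of_integral_sq hsupp hint hSm2)
  -- dividing hS by the nonzero constant
  have hSD : ∀ m, ((1 + Polynomial.X^2)^2 : Polynomial ℂ) * ((S m).map (algebraMap ℝ ℂ))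
      = Polynomial.C (cconst R m)⁻¹ * Dpoly R m := by
    intro m
    rw [← hS m, ← mul_assoc, ← mul_assoc, ← Polynomial.C_mul, inv_mul_cancel₀ (hc m),
      Polynomial.C_1, one_mul]
  -- the main conclusion
  intro n hn
  set ρ : ℝ := rho μ S n with hρdef
  set Q : Polynomial ℝ := P n - S n - Polynomial.C ρ * S (n-2) with hQdef
  have hQtop : ∀ N, n ≤ N → Q.coeff N = 0 := by
    intro N hN
    have hPS : (P n).coeff N = (S n).coeff N := by
      rcases eq_or_lt_of_le hN with h | h
      · rw [← h]
        have h1 := (hPmonic n).coeff_natDegree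
        rw [hPdeg n] at h1
        have h2 := (hSmd n).1.coeff_natDegree
        rw [(hSmd n).2] at h2
        rw [h1, h2]
      · rw [Polynomial.coeff_eq_zero_of_natDegree_lt (by rw [hPdeg n]; omega),
          Polynomial.coeff_eq_zero_of_natDegree_lt (by rw [(hSmd n).2]; omega)]
    have hS2 : (S (n-2)).coeff N = 0 :=
      Polynomial.coeff_eq_zero_of_natDegree_lt (by rw [(hSmd (n-2)).2]; omega)
    rw [hQdef]
    simp [Polynomial.coeff_sub, Polynomial.coeff_C_mul, hPS, hS2]
  have hQdeg : Q.natDegree ≤ n - 1 :=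
    Polynomial.natDegree_le_iff_coeff_eq_zero.mpr (fun N hN => hQtop N (by omega))
  set r : Polynomial ℝ := Q %ₘ ((1+X^2)^2) with hrdef
  have hIQQ : ∫ x, (Q.eval x)^2 ∂μ
      = ∫ x, (P n).eval x * Q.eval x ∂μ - (∫ x, (S n).eval x * Q.eval x ∂μ
        + ρ * ∫ x, (S (n-2)).eval x * Q.eval x ∂μ) := by
    have e : (fun x => (Q.eval x)^2)
        = fun x => (P n).eval x * Q.eval x - ((S n).eval x * Q.eval x
            + ρ * ((S (n-2)).eval x * Q.eval x)) := by
      funext x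
      have hQe : Q.eval x = (P n).eval x - (S n).eval x - ρ * (S (n-2)).eval x := by
        rw [hQdef]
        simp [Polynomial.eval_sub, Polynomial.eval_mul, Polynomial.eval_C]
      linear_combination (Q.eval x) * hQe
    have K1 : Integrable (fun x => (P n).eval x * Q.eval x) μ := hintmul _ _
    have K2 : Integrable (fun x => (S n).eval x * Q.eval x) μ := hintmul _ _
    have K3 : Integrable (fun x => ρ * ((S (n-2)).eval x * Q.eval x)) μ :=
      (hintmul _ _).const_mul ρ
    have K23 : Integrable (fun x => (S n).eval x * Q.eval x
        + ρ * ((S (n-2)).eval x * Q.eval x)) μ := by exact K2.add K3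
    rw [e, integral_sub K1 K23, integral_add K2 K3, integral_const_mul]
  have hPQ : ∫ x, (P n).eval x * Q.eval x ∂μ = 0 := hPorth' (n-1) Q hQdeg n (by omega)
  have hSnQ : ∫ x, (S n).eval x * Q.eval x ∂μ = ∫ x, (S n).eval x * r.eval x ∂μ :=
    hred n hn Q (by omega)
  have hrsmall : n ≤ 3 → r = Q := by
    intro h3
    rw [hrdef]
    apply (Polynomial.modByMonic_eq_self_iff Stmt9Aux.gmonic).mpr
    rcases eq_or_ne Q 0 with h0 | h0
    · rw [h0]
      rw [Polynomial.degree_eq_natDegree Stmt9Aux.gmonic.ne_zero, Stmt9Aux.gnatDegree]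
      exact WithBot.bot_lt_coe 4
    · rw [Polynomial.degree_eq_natDegree h0,
        Polynomial.degree_eq_natDegree Stmt9Aux.gmonic.ne_zero, Stmt9Aux.gnatDegree]
      exact hcast _ _ (by omega)
  have hQint : ∫ x, (Q.eval x)^2 ∂μ = 0 := by
    by_cases hn2 : n ≤ 2
    · have hρ0 : ρ = 0 := by rw [hρdef, rho, if_pos hn2]
      have hr1 : ∫ x, (S n).eval x * r.eval x ∂μ = 0 := by
        rw [hmomr n r (hrmod3 Q), hSint n hn]
        have hc2 : r.coeff 2 = 0 := by
          rw [hrsmall (by omega)]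
          exact Polynomial.coeff_eq_zero_of_natDegree_lt (by omega)
        have hc3 : r.coeff 3 = 0 := by
          rw [hrsmall (by omega)]
          exact Polynomial.coeff_eq_zero_of_natDegree_lt (by omega)
        have hr1' : r.coeff 1 * (∫ x, x * (S n).eval x ∂μ) = 0 := by
          interval_cases n
          · have hc1 : r.coeff 1 = 0 := by
              rw [hrsmall (by omega)]
              exact Polynomial.coeff_eq_zero_of_natDegree_lt (by omega)
            rw [hc1, zero_mul]
          · rw [hmom1 2 (by decide), mul_zero]
        rw [hc2, hc3, hr1']
        ring
      rw [hIQQ, hPQ, hSnQ, hr1, hρ0]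
      ring
    · push_neg at hn2
      have hS2Q : ∫ x, (S (n-2)).eval x * Q.eval x ∂μ = ∫ x, (S (n-2)).eval x * r.eval x ∂μ :=
        hred (n-2) (by omega) Q (by omega)
      rcases Nat.even_or_odd n with heven | hodd
      · -- n even, n ≥ 4
        have hn4 : 4 ≤ n := by
          rcases heven with ⟨k, hk⟩
          omega
        have heven2 : Even (n-2) := by rw [Nat.even_iff] at heven ⊢; omega
        have hρval : ρ = -(∫ x, x^2 * (S n).eval x ∂μ) / (∫ x, x^2 * (S (n-2)).eval x ∂μ) := by
          rw [hρdef, rho, if_neg (by omega), if_neg (by simp [Nat.odd_iff, Nat.even_iff] at heven ⊢; omega)]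
        have hA : ∫ x, (S n).eval x * r.eval x ∂μ = r.coeff 2 * ∫ x, x^2 * (S n).eval x ∂μ := by
          rw [hmomr n r (hrmod3 Q), hSint n hn, hmom1 n heven, hmom3 n heven]
          ring
        have hB : ∫ x, (S (n-2)).eval x * r.eval x ∂μ
            = r.coeff 2 * ∫ x, x^2 * (S (n-2)).eval x ∂μ := by
          rw [hmomr (n-2) r (hrmod3 Q), hSint (n-2) (by omega), hmom1 (n-2) heven2,
            hmom3 (n-2) heven2]
          ring
        have hMne : ∫ x, x^2 * (S (n-2)).eval x ∂μ ≠ 0 := hNeven (n-2) (by omega) heven2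
        rw [hIQQ, hPQ, hSnQ, hS2Q, hA, hB, hρval]
        field_simp
        ring
      · -- n odd, n ≥ 3
        have hodd2 : Odd (n-2) := by rw [Nat.odd_iff] at hodd ⊢; omega
        have hρval : ρ = -(∫ x, x * (S n).eval x ∂μ) / (∫ x, x * (S (n-2)).eval x ∂μ) := by
          rw [hρdef, rho, if_neg (by omega), if_pos hodd]
        have hA : ∫ x, (S n).eval x * r.eval x ∂μ
            = (r.coeff 1 - e3 * r.coeff 3) * ∫ x, x * (S n).eval x ∂μ := by
          rw [hmomr n r (hrmod3 Q), hSint n hn, hmom2 n hodd, hI3 n (by omega)]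
          ring
        have hB : ∫ x, (S (n-2)).eval x * r.eval x ∂μ
            = (r.coeff 1 - e3 * r.coeff 3) * ∫ x, x * (S (n-2)).eval x ∂μ := by
          rcases eq_or_lt_of_le (show 3 ≤ n by omega) with h3 | h5
          · -- n = 3 : the x³-coefficient of r vanishes
            have hc3 : r.coeff 3 = 0 := by
              rw [hrsmall (by omega)]
              exact Polynomial.coeff_eq_zero_of_natDegree_lt (by omega)
            rw [hmomr (n-2) r (hrmod3 Q), hSint (n-2) (by omega), hmom2 (n-2) hodd2, hc3]
            ring
          · rw [hmomr (n-2) r (hrmod3 Q), hSint (n-2) (by omega), hmom2 (n-2) hodd2,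
              hI3 (n-2) (by omega)]
            ring
        have hMne : ∫ x, x * (S (n-2)).eval x ∂μ ≠ 0 := by
          rcases eq_or_lt_of_le (show 3 ≤ n by omega) with h3 | h5
          · have : n - 2 = 1 := by omega
            rw [this]
            exact hN1
          · exact hNodd (n-2) (by omega) hodd2
        rw [hIQQ, hPQ, hSnQ, hS2Q, hA, hB, hρval]
        field_simp
        ring
  have hQ0 : Q = 0 := Stmt9Aux.poly_eq_zero_of_integral_sq hsupp hint hQint
  have key : P n = S n + Polynomial.C ρ * S (n-2) := by
    have h2 : P n - (S n + Polynomial.C ρ * S (n-2)) = 0 := by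
      rw [sub_add_eq_sub_sub, ← hQdef, hQ0]
    exact sub_eq_zero.mp h2
  refine ⟨key, ?_⟩
  have hmapkey := congrArg (Polynomial.map (algebraMap ℝ ℂ)) key
  rw [Polynomial.map_add, Polynomial.map_mul, Polynomial.map_C] at hmapkey
  rw [hmapkey, mul_add, hSD n,
    show ((1 + Polynomial.X^2)^2 : Polynomial ℂ)
        * (Polynomial.C (algebraMap ℝ ℂ ρ) * (S (n-2)).map (algebraMap ℝ ℂ))
      = Polynomial.C (algebraMap ℝ ℂ ρ)
        * (((1 + Polynomial.X^2)^2 : Polynomial ℂ) * (S (n-2)).map (algebraMap ℝ ℂ)) from by ring,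
    hSD (n-2)]
  norm_num [Complex.coe_algebraMap]
end

section
/- Let ψ ∈ ℂ[x] be a monic polynomial of degree k with ψ′(i) = 0 and ψ′(−i) = 0. Then for every n ≥ 0 there exist complex constants c_{n,m} such that ψ(x) R_n(x) = Σ_{m = max(0, n−k)}^{n+k} c_{n,m} R_m(x); i.e., ψ·R_n lies in the ℂ-linear span of {R_m : max(0, n−k) ≤ m ≤ n+k}. -/
open MeasureTheory Polynomial

-- generic small lemmas
lemma aux_evmap (p : Polynomial ℝ) (x : ℝ) :
    (p.map (algebraMap ℝ ℂ)).eval (x : ℂ) = ((p.eval x : ℝ) : ℂ) := by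
  rw [eval_map, ← Complex.coe_algebraMap, Polynomial.eval₂_at_apply]

lemma aux_evconj (p : Polynomial ℝ) (z : ℂ) :
    (p.map (algebraMap ℝ ℂ)).eval ((starRingEnd ℂ) z)
      = (starRingEnd ℂ) ((p.map (algebraMap ℝ ℂ)).eval z) := by
  have h1 := Polynomial.aeval_conj (K := ℂ) p z
  simpa [Polynomial.aeval_def, Polynomial.eval_map] using h1

lemma aux_smalldeg {q : Polynomial ℂ} (hd : q.natDegree ≤ 1)
    (h1 : q.eval Complex.I = 0) (h2 : q.eval (-Complex.I) = 0) : q = 0 := by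
  have hq := Polynomial.eq_X_add_C_of_natDegree_le_one hd
  rw [hq] at h1 h2 ⊢
  simp only [Polynomial.eval_add, Polynomial.eval_mul, Polynomial.eval_C,
    Polynomial.eval_X] at h1 h2
  have hc0 : q.coeff 0 = 0 := by linear_combination (h1 + h2) / 2
  have hc1 : q.coeff 1 * Complex.I = 0 := by linear_combination (h1 - h2) / 2
  rcases mul_eq_zero.mp hc1 with hc1 | hI
  · simp [hc0, hc1]
  · exact absurd hI Complex.I_ne_zero

lemma aux_redStep {K : Type*} [Field K] {p g : Polynomial K} (hg : g.Monic)
    (hdeg : g.natDegree = p.natDegree) (hp : 1 ≤ p.natDegree) :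
    (p - Polynomial.C p.leadingCoeff * g).natDegree < p.natDegree := by
  have hp0 : p ≠ 0 := fun h => by simp [h] at hp
  by_cases h0 : p - Polynomial.C p.leadingCoeff * g = 0
  · rw [h0, Polynomial.natDegree_zero]; exact hp
  · rw [Polynomial.natDegree_lt_iff_degree_lt h0, ← Polynomial.degree_eq_natDegree hp0]
    apply Polynomial.degree_sub_lt
    · rw [Polynomial.degree_C_mul (Polynomial.leadingCoeff_ne_zero.mpr hp0),
        Polynomial.degree_eq_natDegree hp0, Polynomial.degree_eq_natDegree hg.ne_zero, hdeg]
    · exact hp0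
    · rw [Polynomial.leadingCoeff_mul, Polynomial.leadingCoeff_C, hg.leadingCoeff, mul_one]

lemma aux_monicX2 : (Polynomial.X ^ 2 + 1 : Polynomial ℝ).Monic := by
  have := Polynomial.monic_X_pow_add_C (R := ℝ) (a := 1) (two_ne_zero)
  simpa using this

lemma aux_real_lin {r : Polynomial ℝ} (hd : r.natDegree ≤ 1)
    (h : (r.map (algebraMap ℝ ℂ)).eval Complex.I = 0) : r = 0 := by
  have hq := Polynomial.eq_X_add_C_of_natDegree_le_one hd
  rw [hq] at h ⊢
  simp only [Polynomial.map_add, Polynomial.map_mul, Polynomial.map_C, Polynomial.map_X,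
    Polynomial.eval_add, Polynomial.eval_mul, Polynomial.eval_C, Polynomial.eval_X,
    Complex.coe_algebraMap] at h
  rw [Complex.ext_iff] at h
  simp only [Complex.add_re, Complex.add_im, Complex.mul_re, Complex.mul_im,
    Complex.ofReal_re, Complex.ofReal_im, Complex.I_re, Complex.I_im, Complex.zero_re,
    Complex.zero_im] at h
  obtain ⟨h1, h2⟩ := h
  have e1 : r.coeff 0 = 0 := by linarith
  have e2 : r.coeff 1 = 0 := by linarith
  simp [e1, e2]

lemma aux_dvd_of_evI {q : Polynomial ℝ}
    (h : ((Polynomial.derivative q).map (algebraMap ℝ ℂ)).eval Complex.I = 0) :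
    (Polynomial.X ^ 2 + 1 : Polynomial ℝ) ∣ Polynomial.derivative q := by
  set dq := Polynomial.derivative q with hdq
  rw [← Polynomial.modByMonic_eq_zero_iff_dvd aux_monicX2]
  set r := dq %ₘ (Polynomial.X ^ 2 + 1) with hr
  have hdeg : r.natDegree ≤ 1 := by
    have hlt := Polynomial.degree_modByMonic_lt dq aux_monicX2
    have hd2 : (Polynomial.X ^ 2 + 1 : Polynomial ℝ).degree = 2 := by
      have := Polynomial.degree_X_pow_add_C (by norm_num : 0 < 2) (1 : ℝ)
      simpa using this
    rw [hd2] at hlt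
    by_cases h0 : r = 0
    · simp [h0]
    · have : r.natDegree < 2 := by
        rw [Polynomial.natDegree_lt_iff_degree_lt h0]
        exact_mod_cast hlt
      omega
  have hsum := Polynomial.modByMonic_add_div dq (Polynomial.X ^ 2 + 1 : Polynomial ℝ)
  have heq : (r.map (algebraMap ℝ ℂ)).eval Complex.I = 0 := by
    have : dq = r + (Polynomial.X ^ 2 + 1) * (dq /ₘ (Polynomial.X ^ 2 + 1)) := by
      rw [hr]; linear_combination -hsum
    rw [this] at h
    simp only [Polynomial.map_add, Polynomial.map_mul, Polynomial.map_pow, Polynomial.map_X,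
      Polynomial.map_one, Polynomial.eval_add, Polynomial.eval_mul, Polynomial.eval_pow,
      Polynomial.eval_X, Polynomial.eval_one, Complex.I_sq] at h
    simpa using h
  exact aux_real_lin hdeg heq

lemma aux_int2 (μ : Measure ℝ) (hint : ∀ p : Polynomial ℝ, Integrable (fun x => p.eval x) μ)
    (p q : Polynomial ℝ) :
    Integrable (fun x => p.eval x * q.eval x / (1 + x ^ 2) ^ 2) μ := by
  refine (hint (p * q)).mono ?_ (Filter.Eventually.of_forall fun x => ?_)
  · exact (((p.continuous_aeval).mul (q.continuous_aeval)).div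
      (by fun_prop) (fun x => by positivity)).aestronglyMeasurable
  · simp only [Real.norm_eq_abs, Polynomial.eval_mul, abs_div]
    rw [abs_of_nonneg (by positivity : (0:ℝ) ≤ (1 + x ^ 2) ^ 2)]
    exact div_le_self (abs_nonneg _) (by nlinarith [sq_nonneg x, sq_nonneg (x^2)])

lemma aux_int1 (μ : Measure ℝ) (hint : ∀ p : Polynomial ℝ, Integrable (fun x => p.eval x) μ)
    (p : Polynomial ℝ) :
    Integrable (fun x => p.eval x / (1 + x ^ 2) ^ 2) μ := by
  refine (hint p).mono ?_ (Filter.Eventually.of_forall fun x => ?_)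
  · exact ((p.continuous_aeval).div (by fun_prop) (fun x => by positivity)).aestronglyMeasurable
  · simp only [Real.norm_eq_abs, abs_div]
    rw [abs_of_nonneg (by positivity : (0:ℝ) ≤ (1 + x ^ 2) ^ 2)]
    exact div_le_self (abs_nonneg _) (by nlinarith [sq_nonneg x, sq_nonneg (x^2)])

lemma aux_intmul (μ : Measure ℝ) (hint : ∀ p : Polynomial ℝ, Integrable (fun x => p.eval x) μ)
    (p q : Polynomial ℝ) :
    Integrable (fun x => p.eval x * q.eval x) μ := by
  simpa [Polynomial.eval_mul] using hint (p * q)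

lemma aux_orthoP (μ : Measure ℝ) (hint : ∀ p : Polynomial ℝ, Integrable (fun x => p.eval x) μ)
    (P : ℕ → Polynomial ℝ)
    (hPmonic : ∀ n, (P n).Monic) (hPdeg : ∀ n, (P n).natDegree = n)
    (hPorth : ∀ m n, m ≠ n → ∫ x, (P m).eval x * (P n).eval x ∂μ = 0) :
    ∀ (d : ℕ) (q : Polynomial ℝ), q.natDegree ≤ d → ∀ j, d < j →
      ∫ x, q.eval x * (P j).eval x ∂μ = 0 := by
  intro d
  induction d using Nat.strong_induction_on with
  | _ d IH =>
  intro q hq j hj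
  by_cases he : q.natDegree = 0
  · obtain ⟨a, rfl⟩ : ∃ a, q = Polynomial.C a :=
      ⟨q.coeff 0, Polynomial.eq_C_of_natDegree_eq_zero he⟩
    have hP0 : P 0 = 1 := (hPmonic 0).natDegree_eq_zero.mp (hPdeg 0)
    have h00 := hPorth 0 j (by omega)
    rw [hP0] at h00
    simp only [Polynomial.eval_one, one_mul] at h00
    simp only [Polynomial.eval_C]
    rw [MeasureTheory.integral_const_mul, h00, mul_zero]
  · have he1 : 1 ≤ q.natDegree := Nat.one_le_iff_ne_zero.mpr he
    set e := q.natDegree with hee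
    set q2 := q - Polynomial.C q.leadingCoeff * P e with hq2
    have hlt : q2.natDegree < e := aux_redStep (hPmonic e) (hPdeg e) he1
    have hrec := IH q2.natDegree (by omega) q2 le_rfl j (by omega)
    have hsplit : (fun x => q.eval x * (P j).eval x)
        = fun x => q2.eval x * (P j).eval x
            + q.leadingCoeff * ((P e).eval x * (P j).eval x) := by
      funext x
      simp only [hq2, Polynomial.eval_sub, Polynomial.eval_mul, Polynomial.eval_C]
      ring
    rw [hsplit, MeasureTheory.integral_add (aux_intmul μ hint q2 (P j))
      ((aux_intmul μ hint (P e) (P j)).const_mul _)]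
    rw [hrec, MeasureTheory.integral_const_mul, hPorth e j (by omega), mul_zero, add_zero]

lemma aux_degCP (P : ℕ → Polynomial ℝ) (hPmonic : ∀ n, (P n).Monic)
    (hPdeg : ∀ n, (P n).natDegree = n) (a : ℝ) {i j : ℕ} (hij : j < i) :
    (Polynomial.C a * P j).degree < (P i).degree := by
  calc (Polynomial.C a * P j).degree
      ≤ (Polynomial.C a).degree + (P j).degree := Polynomial.degree_mul_le _ _
    _ ≤ 0 + (P j).degree := add_le_add Polynomial.degree_C_le le_rfl
    _ = (P j).degree := zero_add _
    _ < (P i).degree := by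
        rw [Polynomial.degree_eq_natDegree (hPmonic j).ne_zero,
          Polynomial.degree_eq_natDegree (hPmonic i).ne_zero, hPdeg, hPdeg]
        exact_mod_cast hij

lemma aux_Rmonic (P : ℕ → Polynomial ℝ) (hPmonic : ∀ n, (P n).Monic)
    (hPdeg : ∀ n, (P n).natDegree = n)
    (A B : ℕ → ℝ) (R : ℕ → Polynomial ℝ)
    (hR1 : R 1 = P 3 + Polynomial.C (A 1) * P 1)
    (hRn : ∀ n, 2 ≤ n →
      R n = P (n+2) + Polynomial.C (A n) * P n + Polynomial.C (B n) * P (n-2)) :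
    ∀ m, 1 ≤ m → (R m).Monic ∧ (R m).natDegree = m + 2 := by
  intro m hm
  rcases eq_or_lt_of_le hm with h1 | h2
  · rw [← h1, hR1]
    have hd := aux_degCP P hPmonic hPdeg (A 1) (by omega : 1 < 3)
    exact ⟨(hPmonic 3).add_of_left hd,
      by rw [Polynomial.natDegree_add_eq_left_of_degree_lt hd, hPdeg]⟩
  · rw [hRn m (by omega)]
    have hd1 := aux_degCP P hPmonic hPdeg (A m) (by omega : m < m + 2)
    have hd2 := aux_degCP P hPmonic hPdeg (B m) (by omega : m - 2 < m + 2)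
    have hsum : (P (m+2) + Polynomial.C (A m) * P m).degree = (P (m+2)).degree :=
      Polynomial.degree_add_eq_left_of_degree_lt hd1
    have hd2' : (Polynomial.C (B m) * P (m-2)).degree
        < (P (m+2) + Polynomial.C (A m) * P m).degree := by rw [hsum]; exact hd2
    refine ⟨((hPmonic (m+2)).add_of_left hd1).add_of_left hd2', ?_⟩
    rw [Polynomial.natDegree_add_eq_left_of_degree_lt hd2',
      Polynomial.natDegree_add_eq_left_of_degree_lt hd1, hPdeg]

lemma aux_repWr (r1 : Polynomial ℝ) (h1m : r1.Monic) (h1d : r1.natDegree = 3)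
    (h1dvd : (Polynomial.X ^ 2 + 1 : Polynomial ℝ) ∣ Polynomial.derivative r1) :
    ∀ (d : ℕ) (p : Polynomial ℝ), p.natDegree ≤ d →
      (Polynomial.X ^ 2 + 1 : Polynomial ℝ) ∣ Polynomial.derivative p →
    ∃ a b q, p = Polynomial.C a + Polynomial.C b * r1 + (Polynomial.X ^ 2 + 1) ^ 2 * q
      ∧ q.natDegree ≤ d - 4 := by
  intro d
  induction d using Nat.strong_induction_on with
  | _ d IH =>
  intro p hpd hdvd
  by_cases h2 : p.natDegree ≤ 2
  · have hd' : Polynomial.derivative p = 0 := by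
      by_contra hne
      have h1 := Polynomial.natDegree_le_of_dvd hdvd hne
      have hX : (Polynomial.X ^ 2 + 1 : Polynomial ℝ).natDegree = 2 := by
        have := aux_monicX2.natDegree_eq_zero
        have h4 : (Polynomial.X ^ 2 + (1:Polynomial ℝ)).natDegree
            = (Polynomial.X ^ 2 + Polynomial.C (1:ℝ)).natDegree := by norm_num
        rw [h4, Polynomial.natDegree_X_pow_add_C]
      have hdp := Polynomial.natDegree_derivative_le p
      omega
    obtain ⟨a, rfl⟩ : ∃ a, p = Polynomial.C a :=
      ⟨p.coeff 0, Polynomial.eq_C_of_natDegree_eq_zero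
        (Polynomial.natDegree_eq_zero_of_derivative_eq_zero hd')⟩
    exact ⟨a, 0, 0, by simp, by simp⟩
  push_neg at h2
  have hp0 : p ≠ 0 := fun h => by rw [h] at h2; simp at h2
  by_cases h3 : p.natDegree = 3
  · set p2 := p - Polynomial.C p.leadingCoeff * r1 with hp2
    have hlt : p2.natDegree < p.natDegree :=
      aux_redStep h1m (by omega) (by omega)
    have hdvd2 : (Polynomial.X ^ 2 + 1 : Polynomial ℝ) ∣ Polynomial.derivative p2 := by
      rw [hp2, Polynomial.derivative_sub, Polynomial.derivative_C_mul]
      exact dvd_sub hdvd (h1dvd.mul_left _)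
    obtain ⟨a, b, q, heq, hqd⟩ := IH p2.natDegree (by omega) p2 le_rfl hdvd2
    refine ⟨a, b + p.leadingCoeff, q, ?_, by omega⟩
    rw [map_add]
    linear_combination heq - hp2
  · have h4 : 4 ≤ p.natDegree := by omega
    set m := p.natDegree - 4 with hm
    set g := (Polynomial.X ^ 2 + 1 : Polynomial ℝ) ^ 2 * Polynomial.X ^ m with hg
    have hgm : g.Monic := (aux_monicX2.pow 2).mul (Polynomial.monic_X_pow m)
    have hX2d : ((Polynomial.X ^ 2 + 1 : Polynomial ℝ) ^ 2).natDegree = 4 := by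
      rw [Polynomial.Monic.natDegree_pow aux_monicX2]
      have h4' : (Polynomial.X ^ 2 + (1:Polynomial ℝ)).natDegree
          = (Polynomial.X ^ 2 + Polynomial.C (1:ℝ)).natDegree := by norm_num
      rw [h4', Polynomial.natDegree_X_pow_add_C]
    have hgd : g.natDegree = p.natDegree := by
      rw [hg, (aux_monicX2.pow 2).natDegree_mul (Polynomial.monic_X_pow m), hX2d,
        Polynomial.natDegree_X_pow]
      omega
    set p2 := p - Polynomial.C p.leadingCoeff * g with hp2
    have hlt : p2.natDegree < p.natDegree := aux_redStep hgm hgd (by omega)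
    have hdvdg : (Polynomial.X ^ 2 + 1 : Polynomial ℝ) ∣ Polynomial.derivative g := by
      rw [hg, Polynomial.derivative_mul]
      apply dvd_add
      · apply dvd_mul_of_dvd_left
        rw [Polynomial.derivative_pow]
        exact dvd_mul_of_dvd_left (by
          norm_num) _
      · exact dvd_mul_of_dvd_left (dvd_pow_self _ two_ne_zero) _
    have hdvd2 : (Polynomial.X ^ 2 + 1 : Polynomial ℝ) ∣ Polynomial.derivative p2 := by
      rw [hp2, Polynomial.derivative_sub, Polynomial.derivative_C_mul]
      exact dvd_sub hdvd (hdvdg.mul_left _)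
    obtain ⟨a, b, q, heq, hqd⟩ := IH p2.natDegree (by omega) p2 le_rfl hdvd2
    refine ⟨a, b, q + Polynomial.C p.leadingCoeff * Polynomial.X ^ m, ?_, ?_⟩
    · linear_combination heq - hp2 + Polynomial.C p.leadingCoeff * hg
    · have hb := Polynomial.natDegree_add_le q (Polynomial.C p.leadingCoeff * Polynomial.X ^ m)
      have hb2 := Polynomial.natDegree_C_mul_le p.leadingCoeff (Polynomial.X ^ m)
      rw [Polynomial.natDegree_X_pow] at hb2
      omega

lemma aux_orthoRn (μ : Measure ℝ) (hint : ∀ p : Polynomial ℝ, Integrable (fun x => p.eval x) μ)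
    (P : ℕ → Polynomial ℝ)
    (hPmonic : ∀ n, (P n).Monic) (hPdeg : ∀ n, (P n).natDegree = n)
    (hPorth : ∀ m n, m ≠ n → ∫ x, (P m).eval x * (P n).eval x ∂μ = 0)
    (A B : ℕ → ℝ) (R : ℕ → Polynomial ℝ)
    (hRn : ∀ n, 2 ≤ n →
      R n = P (n+2) + Polynomial.C (A n) * P n + Polynomial.C (B n) * P (n-2)) :
    ∀ n (q : Polynomial ℝ), 2 ≤ n → q.natDegree + 3 ≤ n →
      ∫ x, q.eval x * (R n).eval x ∂μ = 0 := by
  intro n q hn hq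
  have hsplit : (fun x => q.eval x * (R n).eval x)
      = fun x => q.eval x * (P (n+2)).eval x
          + (A n * (q.eval x * (P n).eval x) + B n * (q.eval x * (P (n-2)).eval x)) := by
    funext x
    rw [hRn n hn]
    simp only [Polynomial.eval_add, Polynomial.eval_mul, Polynomial.eval_C]
    ring
  have h1 : Integrable (fun x => q.eval x * (P (n+2)).eval x) μ := aux_intmul μ hint q (P (n+2))
  have h2 : Integrable (fun x => A n * (q.eval x * (P n).eval x)) μ :=
    (aux_intmul μ hint q (P n)).const_mul _
  have h3 : Integrable (fun x => B n * (q.eval x * (P (n-2)).eval x)) μ :=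
    (aux_intmul μ hint q (P (n-2))).const_mul _
  have h23 : Integrable (fun x => A n * (q.eval x * (P n).eval x)
      + B n * (q.eval x * (P (n-2)).eval x)) μ := h2.add h3
  rw [hsplit, MeasureTheory.integral_add h1 h23, MeasureTheory.integral_add h2 h3,
    MeasureTheory.integral_const_mul, MeasureTheory.integral_const_mul]
  have O := aux_orthoP μ hint P hPmonic hPdeg hPorth q.natDegree q le_rfl
  rw [O (n+2) (by omega), O n (by omega), O (n-2) (by omega)]
  ring

lemma aux_orthoRR (μ : Measure ℝ) (hint : ∀ p : Polynomial ℝ, Integrable (fun x => p.eval x) μ)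
    (P : ℕ → Polynomial ℝ)
    (hPmonic : ∀ n, (P n).Monic) (hPdeg : ∀ n, (P n).natDegree = n)
    (hPorth : ∀ m n, m ≠ n → ∫ x, (P m).eval x * (P n).eval x ∂μ = 0)
    (A B : ℕ → ℝ) (R : ℕ → Polynomial ℝ)
    (hR0 : R 0 = 1)
    (hR1 : R 1 = P 3 + Polynomial.C (A 1) * P 1)
    (hRn : ∀ n, 2 ≤ n →
      R n = P (n+2) + Polynomial.C (A n) * P n + Polynomial.C (B n) * P (n-2))
    (hRdvd : ∀ m, (Polynomial.X ^ 2 + 1 : Polynomial ℝ) ∣ Polynomial.derivative (R m))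
    (hRii : ∀ n, 1 ≤ n → ∫ x, (R n).eval x / (1+x^2)^2 ∂μ = 0)
    (hRiii : ∀ n, 2 ≤ n → ∫ x, (R 1).eval x * (R n).eval x / (1+x^2)^2 ∂μ = 0) :
    ∀ m n, m < n → ∫ x, (R m).eval x * (R n).eval x / (1+x^2)^2 ∂μ = 0 := by
  intro m n hmn
  match m with
  | 0 =>
    have h1 := hRii n (by omega)
    rw [hR0]
    simpa using h1
  | 1 => exact hRiii n (by omega)
  | (m'+2) =>
    set m := m' + 2 with hm
    have hn3 : 3 ≤ n := by omega
    have hRm := aux_Rmonic P hPmonic hPdeg A B R hR1 hRn m (by omega)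
    have hR1m := aux_Rmonic P hPmonic hPdeg A B R hR1 hRn 1 (by omega)
    obtain ⟨a, b, q, heq, hqd⟩ := aux_repWr (R 1) hR1m.1 hR1m.2 (hRdvd 1)
      (m + 2) (R m) (le_of_eq hRm.2) (hRdvd m)
    have hsplit : (fun x => (R m).eval x * (R n).eval x / (1+x^2)^2)
        = fun x => a * ((R n).eval x / (1+x^2)^2)
            + (b * ((R 1).eval x * (R n).eval x / (1+x^2)^2)
              + q.eval x * (R n).eval x) := by
      funext x
      rw [heq]
      simp only [Polynomial.eval_add, Polynomial.eval_mul, Polynomial.eval_C,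
        Polynomial.eval_pow, Polynomial.eval_X, Polynomial.eval_one]
      have hx : ((1:ℝ) + x^2)^2 ≠ 0 := by positivity
      field_simp
      ring
    have h1 : Integrable (fun x => a * ((R n).eval x / (1+x^2)^2)) μ :=
      (aux_int1 μ hint (R n)).const_mul _
    have h2 : Integrable (fun x => b * ((R 1).eval x * (R n).eval x / (1+x^2)^2)) μ :=
      (aux_int2 μ hint (R 1) (R n)).const_mul _
    have h3 : Integrable (fun x => q.eval x * (R n).eval x) μ := aux_intmul μ hint q (R n)
    have h23 : Integrable (fun x => b * ((R 1).eval x * (R n).eval x / (1+x^2)^2)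
        + q.eval x * (R n).eval x) μ := h2.add h3
    rw [hsplit, MeasureTheory.integral_add h1 h23, MeasureTheory.integral_add h2 h3,
      MeasureTheory.integral_const_mul, MeasureTheory.integral_const_mul,
      hRii n (by omega), hRiii n (by omega),
      aux_orthoRn μ hint P hPmonic hPdeg hPorth A B R hRn n q (by omega) (by omega)]
    ring

lemma aux_Jne (μ : Measure ℝ) (hint : ∀ p : Polynomial ℝ, Integrable (fun x => p.eval x) μ)
    (P : ℕ → Polynomial ℝ)
    (hPmonic : ∀ n, (P n).Monic) (hPdeg : ∀ n, (P n).natDegree = n)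
    (hPorth : ∀ m n, m ≠ n → ∫ x, (P m).eval x * (P n).eval x ∂μ = 0)
    (A B : ℕ → ℝ) (R : ℕ → Polynomial ℝ)
    (hR0 : R 0 = 1)
    (hR1 : R 1 = P 3 + Polynomial.C (A 1) * P 1)
    (hRn : ∀ n, 2 ≤ n →
      R n = P (n+2) + Polynomial.C (A n) * P n + Polynomial.C (B n) * P (n-2))
    (hRdvd : ∀ m, (Polynomial.X ^ 2 + 1 : Polynomial ℝ) ∣ Polynomial.derivative (R m))
    (hRii : ∀ n, 1 ≤ n → ∫ x, (R n).eval x / (1+x^2)^2 ∂μ = 0)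
    (hRiii : ∀ n, 2 ≤ n → ∫ x, (R 1).eval x * (R n).eval x / (1+x^2)^2 ∂μ = 0) :
    ∀ m n, m ≠ n → ∫ x, (R m).eval x * (R n).eval x / (1+x^2)^2 ∂μ = 0 := by
  intro m n hmn
  rcases lt_or_gt_of_ne hmn with h | h
  · exact aux_orthoRR μ hint P hPmonic hPdeg hPorth A B R hR0 hR1 hRn hRdvd hRii hRiii m n h
  · have hcomm : (fun x => (R m).eval x * (R n).eval x / (1+x^2)^2)
        = fun x => (R n).eval x * (R m).eval x / (1+x^2)^2 := by
      funext x; ring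
    rw [hcomm]
    exact aux_orthoRR μ hint P hPmonic hPdeg hPorth A B R hR0 hR1 hRn hRdvd hRii hRiii n m h

lemma aux_Jpos (μ : Measure ℝ) (hsupp : ({x | ∀ U ∈ nhds x, μ U ≠ 0} : Set ℝ).Infinite)
    (hint : ∀ p : Polynomial ℝ, Integrable (fun x => p.eval x) μ)
    (p : Polynomial ℝ) (hp : p ≠ 0) :
    ∫ x, p.eval x * p.eval x / (1+x^2)^2 ∂μ ≠ 0 := by
  have hnn : 0 ≤ fun x : ℝ => p.eval x * p.eval x / (1+x^2)^2 := by
    intro x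
    have := mul_self_nonneg (p.eval x)
    positivity
  have hfi : Integrable (fun x : ℝ => p.eval x * p.eval x / (1+x^2)^2) μ := by
    have := aux_int2 μ hint p p
    simpa using this
  have hpos : 0 < ∫ x, p.eval x * p.eval x / (1+x^2)^2 ∂μ := by
    rw [MeasureTheory.integral_pos_iff_support_of_nonneg hnn hfi]
    obtain ⟨x₀, hx₀m, hx₀r⟩ := (hsupp.diff (Polynomial.finite_setOf_isRoot hp)).nonempty
    have hcont : Continuous fun x : ℝ => p.eval x * p.eval x / (1+x^2)^2 :=
      (p.continuous_aeval.mul p.continuous_aeval).div (by fun_prop) (fun x => by positivity)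
    have hseq : (Function.support fun x : ℝ => p.eval x * p.eval x / (1+x^2)^2)
        = (fun x : ℝ => p.eval x * p.eval x / (1+x^2)^2) ⁻¹' ({0}ᶜ) := by
      ext x; simp [Function.mem_support]
    have hopen : IsOpen (Function.support fun x : ℝ => p.eval x * p.eval x / (1+x^2)^2) := by
      rw [hseq]; exact isOpen_compl_singleton.preimage hcont
    have hx₀s : x₀ ∈ Function.support fun x : ℝ => p.eval x * p.eval x / (1+x^2)^2 := by
      have hev : p.eval x₀ ≠ 0 := hx₀r
      have : ((1:ℝ) + x₀^2)^2 ≠ 0 := by positivity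
      exact div_ne_zero (mul_ne_zero hev hev) this
    have hμ : μ (Function.support fun x : ℝ => p.eval x * p.eval x / (1+x^2)^2) ≠ 0 :=
      hx₀m _ (hopen.mem_nhds hx₀s)
    exact pos_iff_ne_zero.mpr hμ
  exact ne_of_gt hpos

lemma aux_repWc (R : ℕ → Polynomial ℝ) (hR0 : R 0 = 1)
    (hRmon : ∀ m, 1 ≤ m →
      ((R m).map (algebraMap ℝ ℂ)).Monic ∧ ((R m).map (algebraMap ℝ ℂ)).natDegree = m + 2)
    (hRder : ∀ m, (Polynomial.derivative ((R m).map (algebraMap ℝ ℂ))).eval Complex.I = 0 ∧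
                  (Polynomial.derivative ((R m).map (algebraMap ℝ ℂ))).eval (-Complex.I) = 0) :
    ∀ (e d : ℕ) (p : Polynomial ℂ), p.natDegree ≤ e → e ≤ d + 2 →
      (Polynomial.derivative p).eval Complex.I = 0 →
      (Polynomial.derivative p).eval (-Complex.I) = 0 →
      ∃ c : ℕ → ℂ, p = ∑ m ∈ Finset.Iic d, Polynomial.C (c m) * (R m).map (algebraMap ℝ ℂ) := by
  intro e
  induction e using Nat.strong_induction_on with
  | _ e IH =>
  intro d p hpe hed hI hmI
  by_cases h2 : p.natDegree ≤ 2
  · have hder : Polynomial.derivative p = 0 := by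
      refine aux_smalldeg ?_ hI hmI
      have := Polynomial.natDegree_derivative_le p; omega
    obtain ⟨a, rfl⟩ : ∃ a, p = Polynomial.C a :=
      ⟨p.coeff 0, Polynomial.eq_C_of_natDegree_eq_zero
        (Polynomial.natDegree_eq_zero_of_derivative_eq_zero hder)⟩
    refine ⟨fun m => if m = 0 then a else 0, ?_⟩
    rw [Finset.sum_eq_single 0 (fun b _ hb => by simp [hb]) (fun h => by simp at h)]
    simp [hR0]
  · push_neg at h2
    set m := p.natDegree - 2 with hm
    have hm1 : 1 ≤ m := by omega
    obtain ⟨hmon, hdeg⟩ := hRmon m hm1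
    have hgd : ((R m).map (algebraMap ℝ ℂ)).natDegree = p.natDegree := by omega
    set g := (R m).map (algebraMap ℝ ℂ) with hg
    set p2 := p - Polynomial.C p.leadingCoeff * g with hp2
    have hlt : p2.natDegree < p.natDegree := aux_redStep hmon hgd (by omega)
    have hI2 : (Polynomial.derivative p2).eval Complex.I = 0 := by
      rw [hp2, Polynomial.derivative_sub, Polynomial.derivative_C_mul]
      rw [Polynomial.eval_sub, Polynomial.eval_mul, hI, hg, (hRder m).1, mul_zero, sub_zero]
    have hmI2 : (Polynomial.derivative p2).eval (-Complex.I) = 0 := by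
      rw [hp2, Polynomial.derivative_sub, Polynomial.derivative_C_mul]
      rw [Polynomial.eval_sub, Polynomial.eval_mul, hmI, hg, (hRder m).2, mul_zero, sub_zero]
    obtain ⟨c, hc⟩ := IH p2.natDegree (by omega) d p2 le_rfl (by omega) hI2 hmI2
    refine ⟨fun j => c j + if j = m then p.leadingCoeff else 0, ?_⟩
    have hmd : m ∈ Finset.Iic d := Finset.mem_Iic.mpr (by omega)
    have hsum : ∑ j ∈ Finset.Iic d,
        Polynomial.C (c j + if j = m then p.leadingCoeff else 0) * (R j).map (algebraMap ℝ ℂ)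
        = (∑ j ∈ Finset.Iic d, Polynomial.C (c j) * (R j).map (algebraMap ℝ ℂ))
          + Polynomial.C p.leadingCoeff * g := by
      rw [Finset.sum_congr rfl (fun j _ => by
        rw [map_add, add_mul] :
        ∀ j ∈ Finset.Iic d, _ = Polynomial.C (c j) * (R j).map (algebraMap ℝ ℂ)
          + Polynomial.C (if j = m then p.leadingCoeff else 0) * (R j).map (algebraMap ℝ ℂ))]
      rw [Finset.sum_add_distrib]
      congr 1
      rw [Finset.sum_congr rfl (fun j _ => by
        split <;> simp :
        ∀ j ∈ Finset.Iic d, Polynomial.C (if j = m then p.leadingCoeff else 0)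
            * (R j).map (algebraMap ℝ ℂ)
          = if j = m then Polynomial.C p.leadingCoeff * (R j).map (algebraMap ℝ ℂ) else 0)]
      rw [Finset.sum_ite_eq' (Finset.Iic d) m
        (fun j => Polynomial.C p.leadingCoeff * (R j).map (algebraMap ℝ ℂ)), if_pos hmd]
    rw [hsum, ← hc]
    rw [hp2]; ring

lemma aux_TintSum (μ : Measure ℝ) (hint : ∀ p : Polynomial ℝ, Integrable (fun x => p.eval x) μ)
    (R : ℕ → Polynomial ℝ) (c : ℕ → ℂ) (S : Finset ℕ) (j : ℕ) :
    ∫ x : ℝ, (∑ m ∈ S, Polynomial.C (c m) * (R m).map (algebraMap ℝ ℂ)).eval (x:ℂ)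
        * ((R j).map (algebraMap ℝ ℂ)).eval (x:ℂ) / (1+(x:ℂ)^2)^2 ∂μ
      = ∑ m ∈ S, c m * ((∫ x, (R m).eval x * (R j).eval x / (1+x^2)^2 ∂μ : ℝ) : ℂ) := by
  have hfun : ∀ x : ℝ, (∑ m ∈ S, Polynomial.C (c m) * (R m).map (algebraMap ℝ ℂ)).eval (x:ℂ)
        * ((R j).map (algebraMap ℝ ℂ)).eval (x:ℂ) / (1+(x:ℂ)^2)^2
      = ∑ m ∈ S, c m * ((((R m).eval x * (R j).eval x / (1+x^2)^2 : ℝ)) : ℂ) := by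
    intro x
    rw [Polynomial.eval_finset_sum, Finset.sum_mul, Finset.sum_div]
    refine Finset.sum_congr rfl fun m _ => ?_
    rw [Polynomial.eval_mul, Polynomial.eval_C, aux_evmap, aux_evmap]
    push_cast
    ring
  simp only [hfun]
  have hInt : ∀ m ∈ S, Integrable
      (fun x : ℝ => c m * ((((R m).eval x * (R j).eval x / (1+x^2)^2 : ℝ)) : ℂ)) μ := by
    intro m _
    exact ((aux_int2 μ hint (R m) (R j)).ofReal).const_mul _
  rw [MeasureTheory.integral_finset_sum S hInt]
  refine Finset.sum_congr rfl fun m _ => ?_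
  rw [MeasureTheory.integral_const_mul]
  congr 1
  exact integral_ofReal

/-- Proposition 5.2: for a monic ψ ∈ ℂ[x] of degree k with
ψ'(i) = ψ'(-i) = 0, ψ·R_n is a linear combination of R_{n-k}, …, R_{n+k}. -/
theorem stmt_12
    (μ : Measure ℝ)
    (hsymm : μ.map (fun x => -x) = μ)
    (hsupp : (measSupport μ).Infinite)
    (hint : ∀ p : Polynomial ℝ, Integrable (fun x => p.eval x) μ)
    (P : ℕ → Polynomial ℝ)
    (hPmonic : ∀ n, (P n).Monic)
    (hPdeg : ∀ n, (P n).natDegree = n)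
    (hPorth : ∀ m n, m ≠ n → ∫ x, (P m).eval x * (P n).eval x ∂μ = 0)
    (hPparity : ∀ n x, (P n).eval (-x) = (-1 : ℝ)^n * (P n).eval x)
    (A B : ℕ → ℝ) (R : ℕ → Polynomial ℝ)
    (hR0 : R 0 = 1)
    (hR1 : R 1 = P 3 + Polynomial.C (A 1) * P 1)
    (hRn : ∀ n, 2 ≤ n →
      R n = P (n+2) + Polynomial.C (A n) * P n + Polynomial.C (B n) * P (n-2))
    (hRi : ∀ n, 1 ≤ n → devC (R n) Complex.I = 0)
    (hRii : ∀ n, 1 ≤ n → ∫ x, (R n).eval x / (1+x^2)^2 ∂μ = 0)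
    (hRiii : ∀ n, 2 ≤ n → ∫ x, (R 1).eval x * (R n).eval x / (1+x^2)^2 ∂μ = 0)
    (k : ℕ) (ψ : Polynomial ℂ) (hψmonic : ψ.Monic) (hψdeg : ψ.natDegree = k)
    (hψI : (Polynomial.derivative ψ).eval Complex.I = 0)
    (hψmI : (Polynomial.derivative ψ).eval (-Complex.I) = 0) :
    ∀ n : ℕ, ∃ c : ℕ → ℂ,
      ψ * ((R n).map (algebraMap ℝ ℂ))
        = ∑ m ∈ Finset.Icc (n - k) (n + k),
            Polynomial.C (c m) * ((R m).map (algebraMap ℝ ℂ)) := by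
  intro n
  have hRm : ∀ m, 1 ≤ m → (R m).Monic ∧ (R m).natDegree = m + 2 :=
    aux_Rmonic P hPmonic hPdeg A B R hR1 hRn
  have hRne : ∀ j, R j ≠ 0 := by
    intro j
    match j with
    | 0 => rw [hR0]; exact one_ne_zero
    | (j+1) => exact (hRm (j+1) (by omega)).1.ne_zero
  have hRdvd : ∀ m, (Polynomial.X ^ 2 + 1 : Polynomial ℝ) ∣ Polynomial.derivative (R m) := by
    intro m
    match m with
    | 0 => rw [hR0]; simp
    | (m+1) =>
      apply aux_dvd_of_evI
      have h := hRi (m+1) (by omega)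
      unfold devC at h
      rw [← Polynomial.derivative_map]
      exact h
  have hRmonC : ∀ m, 1 ≤ m →
      ((R m).map (algebraMap ℝ ℂ)).Monic ∧ ((R m).map (algebraMap ℝ ℂ)).natDegree = m + 2 := by
    intro m hm
    refine ⟨(hRm m hm).1.map _, ?_⟩
    rw [(hRm m hm).1.natDegree_map _, (hRm m hm).2]
  have hRderC : ∀ m, (Polynomial.derivative ((R m).map (algebraMap ℝ ℂ))).eval Complex.I = 0 ∧
      (Polynomial.derivative ((R m).map (algebraMap ℝ ℂ))).eval (-Complex.I) = 0 := by
    intro m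
    have hIpart : (Polynomial.derivative ((R m).map (algebraMap ℝ ℂ))).eval Complex.I = 0 := by
      match m with
      | 0 => rw [hR0]; simp
      | (m+1) =>
        have h := hRi (m+1) (by omega)
        unfold devC at h
        exact h
    refine ⟨hIpart, ?_⟩
    rw [Polynomial.derivative_map] at hIpart ⊢
    have hconj := aux_evconj (Polynomial.derivative (R m)) Complex.I
    rw [Complex.conj_I] at hconj
    rw [hconj, hIpart, map_zero]
  have hprodI : ∀ j, (Polynomial.derivative (ψ * (R j).map (algebraMap ℝ ℂ))).eval Complex.I = 0 := by
    intro j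
    rw [Polynomial.derivative_mul, Polynomial.eval_add, Polynomial.eval_mul,
      Polynomial.eval_mul, hψI, (hRderC j).1, zero_mul, mul_zero, add_zero]
  have hprodmI : ∀ j,
      (Polynomial.derivative (ψ * (R j).map (algebraMap ℝ ℂ))).eval (-Complex.I) = 0 := by
    intro j
    rw [Polynomial.derivative_mul, Polynomial.eval_add, Polynomial.eval_mul,
      Polynomial.eval_mul, hψmI, (hRderC j).2, zero_mul, mul_zero, add_zero]
  have hRcdeg : ∀ j, ((R j).map (algebraMap ℝ ℂ)).natDegree ≤ j + 2 := by
    intro j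
    match j with
    | 0 => rw [hR0]; simp
    | (j+1) => exact le_of_eq (hRmonC (j+1) (by omega)).2
  have hdegprod : ∀ j, (ψ * (R j).map (algebraMap ℝ ℂ)).natDegree ≤ j + k + 2 := by
    intro j
    refine (Polynomial.natDegree_mul_le).trans ?_
    rw [hψdeg]
    have := hRcdeg j
    omega
  obtain ⟨c, hc⟩ := aux_repWc R hR0 hRmonC hRderC (n+k+2) (n+k)
    (ψ * (R n).map (algebraMap ℝ ℂ)) (hdegprod n) le_rfl (hprodI n) (hprodmI n)
  have key : ∀ j, j + k < n → c j = 0 := by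
    intro j hjk
    obtain ⟨dj, hdj⟩ := aux_repWc R hR0 hRmonC hRderC (j+k+2) (j+k)
      (ψ * (R j).map (algebraMap ℝ ℂ)) (hdegprod j) le_rfl (hprodI j) (hprodmI j)
    have e1 : ∫ x : ℝ, (ψ * (R n).map (algebraMap ℝ ℂ)).eval (x:ℂ)
          * ((R j).map (algebraMap ℝ ℂ)).eval (x:ℂ) / (1+(x:ℂ)^2)^2 ∂μ
        = c j * ((∫ x, (R j).eval x * (R j).eval x / (1+x^2)^2 ∂μ : ℝ) : ℂ) := by
      rw [hc, aux_TintSum μ hint R c (Finset.Iic (n+k)) j]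
      rw [Finset.sum_eq_single j (fun m _ hmj => by
          rw [aux_Jne μ hint P hPmonic hPdeg hPorth A B R hR0 hR1 hRn hRdvd hRii hRiii m j hmj]
          simp)
        (fun hj => absurd (Finset.mem_Iic.mpr (by omega)) hj)]
    have e2 : ∫ x : ℝ, (ψ * (R n).map (algebraMap ℝ ℂ)).eval (x:ℂ)
          * ((R j).map (algebraMap ℝ ℂ)).eval (x:ℂ) / (1+(x:ℂ)^2)^2 ∂μ = 0 := by
      have hswap : ∀ x : ℝ, (ψ * (R n).map (algebraMap ℝ ℂ)).eval (x:ℂ)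
            * ((R j).map (algebraMap ℝ ℂ)).eval (x:ℂ) / (1+(x:ℂ)^2)^2
          = (ψ * (R j).map (algebraMap ℝ ℂ)).eval (x:ℂ)
            * ((R n).map (algebraMap ℝ ℂ)).eval (x:ℂ) / (1+(x:ℂ)^2)^2 := by
        intro x
        simp only [Polynomial.eval_mul]
        ring
      simp only [hswap]
      rw [hdj, aux_TintSum μ hint R dj (Finset.Iic (j+k)) n]
      apply Finset.sum_eq_zero
      intro i hi
      have hin : i < n := by
        have := Finset.mem_Iic.mp hi
        omega
      rw [aux_orthoRR μ hint P hPmonic hPdeg hPorth A B R hR0 hR1 hRn hRdvd hRii hRiii i n hin]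
      simp
    have hJ : ∫ x, (R j).eval x * (R j).eval x / (1+x^2)^2 ∂μ ≠ 0 :=
      aux_Jpos μ hsupp hint (R j) (hRne j)
    rw [e2] at e1
    rcases mul_eq_zero.mp e1.symm with h | h
    · exact h
    · exact absurd (Complex.ofReal_eq_zero.mp h) hJ
  refine ⟨c, ?_⟩
  rw [hc]
  symm
  apply Finset.sum_subset
  · intro m hm
    simp only [Finset.mem_Icc] at hm
    exact Finset.mem_Iic.mpr hm.2
  · intro m hmI hmN
    have hm1 : m + k < n := by
      simp only [Finset.mem_Iic] at hmI
      simp only [Finset.mem_Icc] at hmN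
      omega
    rw [key m hm1]
    simp
end

section
/- For every integer n ≥ 1, the DEK polynomial F_n := He_{n+2} + 2(n+2) He_n + (n+2)(n−1) He_{n−2} (where He_{−1} := 0; note the coefficient (n+2)(n−1) vanishes for n = 1) satisfies F_n′(i) = 0, where the derivative of F_n is evaluated at the imaginary unit i after mapping coefficients into ℂ. -/
open MeasureTheory Polynomial

/-- The monic (probabilists') Hermite polynomials over ℝ. -/
noncomputable def He (n : ℕ) : Polynomial ℝ :=
  (Polynomial.hermite n).map (Int.castRingHom ℝ)

lemma He_zero : He 0 = 1 := by simp [He]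

lemma He_one : He 1 = X := by simp [He, hermite_one]

lemma He_succ (n : ℕ) : He (n+1) = X * He n - Polynomial.derivative (He n) := by
  simp [He, hermite_succ, ← Polynomial.derivative_map]

lemma He_deriv : ∀ n : ℕ, Polynomial.derivative (He (n+1)) = Polynomial.C ((n:ℝ)+1) * He n := by
  intro n
  induction n using Nat.twoStepInduction with
  | zero => simp [He_one, He_zero]
  | one =>
    rw [show (1:ℕ)+1 = 2 from rfl, show He 2 = X * He 1 - Polynomial.derivative (He 1) from He_succ 1, He_one]
    simp; ring
  | more n ih1 ih2 =>
    have hrec : He (n+2) = X * He (n+1) - Polynomial.C ((n:ℝ)+1) * He n := by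
      rw [He_succ (n+1), ih1]
    have ih2' : Polynomial.derivative (He (n+2)) = Polynomial.C ((n:ℝ)+2) * He (n+1) := by
      rw [ih2]; push_cast; ring_nf
    rw [show n+1+1+1 = (n+2)+1 from rfl, He_succ (n+2), Polynomial.derivative_sub,
      Polynomial.derivative_mul, Polynomial.derivative_X, ih2', Polynomial.derivative_mul,
      Polynomial.derivative_C, ih1, hrec]
    push_cast
    simp only [Polynomial.C_add, map_ofNat, Polynomial.C_1]
    ring

lemma He_rec (n : ℕ) : He (n+2) = X * He (n+1) - Polynomial.C ((n:ℝ)+1) * He n := by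
  rw [He_succ (n+1), He_deriv n]

noncomputable def g (n : ℕ) : ℂ := evC (He n) Complex.I

lemma g_rec (n : ℕ) : g (n+2) = Complex.I * g (n+1) - ((n:ℝ)+1) * g n := by
  simp only [g, evC, He_rec n, Polynomial.map_sub, Polynomial.map_mul, Polynomial.map_X,
    Polynomial.map_C, Polynomial.eval_sub, Polynomial.eval_mul, Polynomial.eval_X,
    Polynomial.eval_C]
  norm_num

lemma g_zero : g 0 = 1 := by simp [g, evC, He_zero]
lemma g_one : g 1 = Complex.I := by simp [g, evC, He_one]

lemma devC_eval (a b : ℝ) (p q r : Polynomial ℝ) :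
    devC (p + Polynomial.C a * q + Polynomial.C b * r) Complex.I =
      evC (Polynomial.derivative p) Complex.I + a * evC (Polynomial.derivative q) Complex.I
      + b * evC (Polynomial.derivative r) Complex.I := by
  simp [devC, evC, ← Polynomial.derivative_map, Polynomial.derivative_add,
    Polynomial.derivative_mul]

lemma evC_C_mul (a : ℝ) (p : Polynomial ℝ) (z : ℂ) : evC (Polynomial.C a * p) z = a * evC p z := by
  simp [evC]

lemma evC_He_rec (n : ℕ) : evC (He (n+2)) Complex.I =
    Complex.I * evC (He (n+1)) Complex.I - ((n:ℝ)+1) * evC (He n) Complex.I := by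
  rw [He_rec n]
  simp [evC, evC_C_mul]


/-- for n ≥ 1, the DEK polynomial
F_n = He_{n+2} + 2(n+2) He_n + (n+2)(n-1) He_{n-2} satisfies F_n'(i) = 0.
(For n = 1 the coefficient (n+2)(n-1) vanishes, so the value of He (n-2) there
is irrelevant.) -/
theorem stmt_16 :
    ∀ n : ℕ, 1 ≤ n →
      devC (He (n+2) + Polynomial.C (2 * ((n : ℝ) + 2)) * He n
        + Polynomial.C (((n : ℝ) + 2) * ((n : ℝ) - 1)) * He (n-2)) Complex.I = 0 := by
  intro n hn
  have h0 : evC (0 : Polynomial ℝ) Complex.I = 0 := by simp [evC]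
  match n with
  | 1 =>
    have e1 := evC_He_rec 0
    have e0 : evC (He 0) Complex.I = 1 := by simp [evC, He_zero]
    have e1' : evC (He 1) Complex.I = Complex.I := by simp [evC, He_one]
    have hOne : evC (1 : Polynomial ℝ) Complex.I = 1 := by simp [evC]
    norm_num at e1
    rw [e1', e0] at e1
    rw [show (1:ℕ)-2 = 0 from rfl, devC_eval, show (1:ℕ)+2 = 2+1 from rfl, He_deriv 2,
      He_deriv 0, He_zero]
    simp only [Polynomial.derivative_one, evC_C_mul]
    rw [hOne, h0, e1]
    push_cast
    linear_combination (3:ℂ) * Complex.I_sq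
  | 2 =>
    have e2 := evC_He_rec 0
    have e3 := evC_He_rec 1
    have e0 : evC (He 0) Complex.I = 1 := by simp [evC, He_zero]
    have e1' : evC (He 1) Complex.I = Complex.I := by simp [evC, He_one]
    norm_num at e2 e3
    rw [e1', e0] at e2
    rw [e2, e1'] at e3
    rw [show (2:ℕ)-2 = 0 from rfl, devC_eval, show (2:ℕ)+2 = 3+1 from rfl, He_deriv 3,
      He_deriv 1, He_zero]
    simp only [Polynomial.derivative_one, evC_C_mul]
    rw [h0, e3, e1']
    push_cast
    linear_combination (4*Complex.I) * Complex.I_sq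
  | (m+3) =>
    have e1 := evC_He_rec (m+2)
    have e2 := evC_He_rec (m+1)
    have e3 := evC_He_rec m
    rw [devC_eval, show m+3+2 = (m+4)+1 from rfl, He_deriv (m+4),
      show m+3 = (m+2)+1 from rfl, He_deriv (m+2), show m+2+1-2 = m+1 from rfl, He_deriv m]
    simp only [evC_C_mul]
    push_cast at e1 e2 e3 ⊢
    linear_combination ((m:ℂ)+5) * e1 + ((m:ℂ)+5)*Complex.I * e2 + ((m:ℂ)+5)*((m:ℂ)+2) * e3
      + ((m:ℂ)+5) * (evC (He (m+2)) Complex.I) * Complex.I_sq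
end
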